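/- arXiv:1609.07276 — 6 statements merged into one kernel-verified Lean document; each statement's English description precedes it below -/
import Mathlib

section
/- Let f(x) and g(x) be the power series f(x) = ∑_{n≥0} (∑_{j+k+ℓ=n} (n!/(j!k!ℓ!))²) xⁿ (generating function of sums of squares of trinomial coefficients) and g(x) = ∑_{n≥0} (∑_{j=0}^{n} C(n,j)³) xⁿ (generating function of sums of cubes of binomial coefficients). Then for x in a neighborhood of 0, f(x) = (1/(1−x))·g(x/(1−x)). -/
open scoped BigOperators

open Finset

lemma rev {n k j : ℕ} (hjk : j ≤ k) (hkn : k ≤ n) :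
    n.choose k * k.choose j = n.choose j * (n - j).choose (k - j) := by
  have h1 := Nat.choose_mul_factorial_mul_factorial hkn
  have h2 := Nat.choose_mul_factorial_mul_factorial hjk
  have h3 := Nat.choose_mul_factorial_mul_factorial (Nat.sub_le_sub_right hkn j)
  have h4 := Nat.choose_mul_factorial_mul_factorial (le_trans hjk hkn)
  have e : n - j - (k - j) = n - k := by omega
  rw [e] at h3
  apply Nat.eq_of_mul_eq_mul_right
    (show 0 < j.factorial * ((k-j).factorial * (n-k).factorial) from by positivity)
  have A : n.choose k * k.choose j * (j.factorial * ((k - j).factorial * (n - k).factorial))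
      = (k.choose j * j.factorial * (k - j).factorial) * n.choose k * (n - k).factorial := by ring
  have B : n.choose j * (n - j).choose (k - j) *
        (j.factorial * ((k - j).factorial * (n - k).factorial))
      = ((n-j).choose (k-j) * (k-j).factorial * (n-k).factorial) * n.choose j * j.factorial := by
    ring
  rw [A, h2, B, h3]
  rw [show k.factorial * n.choose k * (n-k).factorial = n.choose k * k.factorial * (n-k).factorial
    from by ring, h1]
  rw [show (n-j).factorial * n.choose j * j.factorial = n.choose j * j.factorial * (n-j).factorial
    from by ring, h4]

lemma vand (a b k : ℕ) :
    (a + b).choose k = ∑ i ∈ range (k+1), a.choose i * b.choose (k - i) := by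
  rw [Nat.add_choose_eq, Finset.Nat.sum_antidiagonal_eq_sum_range_succ_mk]

lemma centralBinom_eq (m : ℕ) : (2*m).choose m = ∑ a ∈ range (m+1), m.choose a ^ 2 := by
  rw [two_mul, vand]
  refine Finset.sum_congr rfl fun a ha => ?_
  rw [Nat.choose_symm (by simpa [Nat.lt_succ_iff] using ha), sq]

lemma sum_eq_of_filter {ι : Type*} {s : Finset ι} (p : ι → Prop) [DecidablePred p] {f g : ι → ℕ}
    (hf : ∀ i ∈ s, ¬ p i → f i = 0) (hg : ∀ i ∈ s, ¬ p i → g i = 0)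
    (h : ∀ i ∈ s, p i → f i = g i) : ∑ i ∈ s, f i = ∑ i ∈ s, g i := by
  rw [← Finset.sum_filter_add_sum_filter_not s p f, ← Finset.sum_filter_add_sum_filter_not s p g]
  congr 1
  · exact Finset.sum_congr rfl fun i hi => by
      rw [Finset.mem_filter] at hi; exact h i hi.1 hi.2
  · rw [Finset.sum_eq_zero fun i hi => by
        rw [Finset.mem_filter] at hi; exact hf i hi.1 hi.2,
      Finset.sum_eq_zero fun i hi => by
        rw [Finset.mem_filter] at hi; exact hg i hi.1 hi.2]

lemma vand2 (a b k : ℕ) (hk : b ≤ k) :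
    ∑ i ∈ range (k+1), a.choose i * b.choose i = (a + b).choose b := by
  rw [vand a b b]
  rw [← Finset.sum_subset (Finset.range_subset_range.2 (by omega : b + 1 ≤ k + 1))
      (fun i _ hi => by
        rw [Finset.mem_range, not_lt] at hi
        rw [Nat.choose_eq_zero_of_lt (by omega : b < i), mul_zero])]
  refine Finset.sum_congr rfl fun i hi => ?_
  rw [Finset.mem_range, Nat.lt_succ_iff] at hi
  rw [Nat.choose_symm hi]

lemma strehl (N : ℕ) :
    ∑ m ∈ range (N+1), N.choose m ^ 2 * (2*m).choose N
      = ∑ j ∈ range (N+1), N.choose j ^ 3 := by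
  calc ∑ m ∈ range (N+1), N.choose m ^ 2 * (2*m).choose N
      = ∑ m ∈ range (N+1), ∑ i ∈ range (N+1),
          (N.choose m * m.choose i) * (N.choose m * m.choose (N - i)) := by
        refine sum_congr rfl fun m hm => ?_
        rw [two_mul m, vand, mul_sum]
        exact sum_congr rfl fun i hi => by ring
    _ = ∑ m ∈ range (N+1), ∑ i ∈ range (N+1),
          (N.choose i * N.choose (N - i)) * ((N - i).choose (N - m) * i.choose (N - m)) := by
        refine sum_congr rfl fun m hm => ?_
        rw [Finset.mem_range, Nat.lt_succ_iff] at hm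
        refine sum_eq_of_filter (fun i => i ≤ m ∧ N ≤ m + i) ?_ ?_ ?_
        · intro i hi hp
          rcases not_and_or.1 hp with h' | h'
          · rw [Nat.choose_eq_zero_of_lt (by omega : m < i)]; ring
          · rw [Nat.choose_eq_zero_of_lt (by omega : m < N - i)]; ring
        · intro i hi hp
          rw [Finset.mem_range, Nat.lt_succ_iff] at hi
          rcases not_and_or.1 hp with h' | h'
          · rw [Nat.choose_eq_zero_of_lt (by omega : N - i < N - m)]; ring
          · rw [Nat.choose_eq_zero_of_lt (by omega : i < N - m)]; ring
        · intro i hi hp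
          rw [Finset.mem_range, Nat.lt_succ_iff] at hi
          obtain ⟨h1, h2⟩ := hp
          have e1 : N.choose m * m.choose i = N.choose i * (N - i).choose (m - i) :=
            rev h1 hm
          have e2 : N.choose m * m.choose (N - i)
              = N.choose (N - i) * (N - (N - i)).choose (m - (N - i)) :=
            rev (by omega) hm
          have e3 : (N - i).choose (m - i) = (N - i).choose (N - m) := by
            rw [← Nat.choose_symm (by omega : N - m ≤ N - i)]
            congr 1; omega
          have e4 : (N - (N - i)).choose (m - (N - i)) = i.choose (N - m) := by
            rw [← Nat.choose_symm (by omega : m - (N - i) ≤ N - (N - i))]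
            congr 1 <;> omega
          calc N.choose m * m.choose i * (N.choose m * m.choose (N - i))
              = (N.choose m * m.choose i) * (N.choose m * m.choose (N - i)) := by ring
            _ = (N.choose i * (N - i).choose (m - i)) *
                  (N.choose (N - i) * (N - (N - i)).choose (m - (N - i))) := by rw [e1, e2]
            _ = _ := by rw [e3, e4]; ring
    _ = ∑ i ∈ range (N+1),
          (N.choose i * N.choose (N - i)) * ∑ m ∈ range (N+1),
            (N - i).choose (N - m) * i.choose (N - m) := by
        rw [Finset.sum_comm]
        exact sum_congr rfl fun i _ => by rw [mul_sum]
    _ = ∑ j ∈ range (N+1), N.choose j ^ 3 := by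
        refine sum_congr rfl fun i hi => ?_
        rw [Finset.mem_range, Nat.lt_succ_iff] at hi
        have hrefl : ∑ m ∈ range (N+1), (N - i).choose (N - m) * i.choose (N - m)
            = ∑ a ∈ range (N+1), (N - i).choose a * i.choose a := by
          rw [← Finset.sum_range_reflect]
          refine sum_congr rfl fun m hm => ?_
          rw [Finset.mem_range, Nat.lt_succ_iff] at hm
          congr 2 <;> omega
        rw [hrefl, vand2 _ _ _ hi, Nat.sub_add_cancel hi, Nat.choose_symm hi]
        ring

lemma transform (n : ℕ) :
    ∑ k ∈ range (n+1), n.choose k * ∑ j ∈ range (k+1), k.choose j ^ 3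
      = ∑ j ∈ range (n+1), n.choose j ^ 2 * (2*j).choose j := by
  calc ∑ k ∈ range (n+1), n.choose k * ∑ j ∈ range (k+1), k.choose j ^ 3
      = ∑ k ∈ range (n+1), ∑ j ∈ range (n+1),
          n.choose k * (k.choose j ^ 2 * (2*j).choose k) := by
        refine sum_congr rfl fun k hk => ?_
        rw [Finset.mem_range, Nat.lt_succ_iff] at hk
        rw [← strehl k, ← mul_sum]
        congr 1
        refine Finset.sum_subset (Finset.range_subset_range.2 (by omega)) fun j _ hj => ?_
        rw [Finset.mem_range, not_lt] at hj
        rw [Nat.choose_eq_zero_of_lt (by omega : k < j)]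
        ring
    _ = ∑ j ∈ range (n+1), ∑ k ∈ range (n+1),
          (n.choose j * (2*j).choose j) * ((n-j).choose (n-k) * j.choose (k-j)) := by
        rw [Finset.sum_comm]
        refine sum_congr rfl fun j hj => ?_
        rw [Finset.mem_range, Nat.lt_succ_iff] at hj
        refine sum_eq_of_filter (fun k => j ≤ k ∧ k ≤ 2*j) ?_ ?_ ?_
        · intro k hk hp
          rcases not_and_or.1 hp with h' | h'
          · rw [Nat.choose_eq_zero_of_lt (by omega : k < j)]; ring
          · rw [Nat.choose_eq_zero_of_lt (by omega : 2*j < k)]; ring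
        · intro k hk hp
          rw [Finset.mem_range, Nat.lt_succ_iff] at hk
          rcases not_and_or.1 hp with h' | h'
          · rw [Nat.choose_eq_zero_of_lt (by omega : n - j < n - k)]; ring
          · rw [Nat.choose_eq_zero_of_lt (by omega : j < k - j)]; ring
        · intro k hk hp
          rw [Finset.mem_range, Nat.lt_succ_iff] at hk
          obtain ⟨h1, h2⟩ := hp
          have e1 : n.choose k * k.choose j = n.choose j * (n - j).choose (k - j) :=
            rev h1 hk
          have e2 : (2*j).choose k * k.choose j = (2*j).choose j * (2*j - j).choose (k - j) :=
            rev h1 h2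
          have e3 : (n - j).choose (k - j) = (n - j).choose (n - k) := by
            rw [← Nat.choose_symm (by omega : n - k ≤ n - j)]
            congr 1; omega
          have e4 : (2*j - j).choose (k - j) = j.choose (k - j) := by congr 1; omega
          calc n.choose k * (k.choose j ^ 2 * (2*j).choose k)
              = (n.choose k * k.choose j) * ((2*j).choose k * k.choose j) := by ring
            _ = (n.choose j * (n - j).choose (k - j)) *
                  ((2*j).choose j * (2*j - j).choose (k - j)) := by rw [e1, e2]
            _ = _ := by rw [e3, e4]; ring
    _ = ∑ j ∈ range (n+1), n.choose j ^ 2 * (2*j).choose j := by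
        refine sum_congr rfl fun j hj => ?_
        rw [Finset.mem_range, Nat.lt_succ_iff] at hj
        rw [← mul_sum]
        have hrefl : ∑ k ∈ range (n+1), (n-j).choose (n-k) * j.choose (k-j)
            = ∑ a ∈ range (n+1), (n-j).choose a * j.choose ((n-j) - a) := by
          rw [← Finset.sum_range_reflect]
          refine sum_congr rfl fun a ha => ?_
          rw [Finset.mem_range, Nat.lt_succ_iff] at ha
          congr 2 <;> omega
        have hsub : ∑ a ∈ range (n+1), (n-j).choose a * j.choose ((n-j) - a)
            = ∑ a ∈ range ((n-j)+1), (n-j).choose a * j.choose ((n-j) - a) := by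
          refine (Finset.sum_subset (Finset.range_subset_range.2 (by omega)) fun a _ ha => ?_).symm
          rw [Finset.mem_range, not_lt] at ha
          rw [Nat.choose_eq_zero_of_lt (by omega : n - j < a)]
          ring
        rw [hrefl, hsub, ← vand (n-j) j (n-j),
          show n - j + j = n from by omega, Nat.choose_symm hj]
        ring

lemma main_nat (n : ℕ) :
    ∑ m ∈ range (n+1), ∑ a ∈ range (m+1), (n.choose m * m.choose a)^2
      = ∑ k ∈ range (n+1), n.choose k * ∑ j ∈ range (k+1), k.choose j ^ 3 := by
  rw [transform]
  refine sum_congr rfl fun m hm => ?_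
  rw [centralBinom_eq, mul_sum]
  exact sum_congr rfl fun a _ => by ring

lemma sum_tri {M : Type*} [AddCommMonoid M] (n : ℕ) (f : ℕ → ℕ → M) :
    ∑ j ∈ range (n+1), ∑ k ∈ range (n+1-j), f (j+k) j
      = ∑ m ∈ range (n+1), ∑ a ∈ range (m+1), f m a := by
  rw [Finset.sum_sigma', Finset.sum_sigma']
  refine Finset.sum_nbij' (fun x => ⟨x.1 + x.2, x.1⟩) (fun x => ⟨x.2, x.1 - x.2⟩)
    ?_ ?_ ?_ ?_ ?_
  · rintro ⟨j, k⟩ h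
    simp only [Finset.mem_sigma, Finset.mem_range] at h ⊢
    omega
  · rintro ⟨m, a⟩ h
    simp only [Finset.mem_sigma, Finset.mem_range] at h ⊢
    omega
  · rintro ⟨j, k⟩ h
    dsimp only
    exact Sigma.ext rfl (heq_of_eq (show j + k - j = k by omega))
  · rintro ⟨m, a⟩ h
    simp only [Finset.mem_sigma, Finset.mem_range] at h
    dsimp only
    exact Sigma.ext (by dsimp only; omega) (heq_of_eq rfl)
  · rintro ⟨j, k⟩ h
    rfl

/-- Sum of squares of trinomial coefficients: `∑_{j+k+ℓ=n} (n!/(j!k!ℓ!))²`. -/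
noncomputable def trinomialSq (n : ℕ) : ℝ :=
  ∑ j ∈ Finset.range (n + 1), ∑ k ∈ Finset.range (n + 1 - j),
    ((n.factorial : ℝ) / (j.factorial * k.factorial * (n - j - k).factorial)) ^ 2

/-- Sum of cubes of binomial coefficients: `∑_{j=0}^n C(n,j)³`. -/
noncomputable def cubeSum (n : ℕ) : ℝ :=
  ∑ j ∈ Finset.range (n + 1), ((n.choose j : ℝ)) ^ 3

lemma trinomialSq_eq (n : ℕ) :
    trinomialSq n = ∑ k ∈ range (n+1), (n.choose k : ℝ) * cubeSum k := by
  have step1 : trinomialSq n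
      = ∑ j ∈ range (n+1), ∑ k ∈ range (n+1-j),
          (fun m a => (((n.choose m * m.choose a : ℕ) : ℝ)) ^ 2) (j+k) j := by
    unfold trinomialSq
    refine sum_congr rfl fun j hj => sum_congr rfl fun k hk => ?_
    rw [Finset.mem_range, Nat.lt_succ_iff] at hj
    rw [Finset.mem_range] at hk
    have hm : j + k ≤ n := by omega
    have e : n - j - k = n - (j+k) := by omega
    have hnat : (n.choose (j+k) * (j+k).choose j) *
        (j.factorial * k.factorial * (n-(j+k)).factorial) = n.factorial := by
      have h1 := Nat.choose_mul_factorial_mul_factorial hm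
      have h2 := Nat.choose_mul_factorial_mul_factorial (Nat.le_add_right j k)
      rw [Nat.add_sub_cancel_left] at h2
      calc (n.choose (j+k) * (j+k).choose j) *
            (j.factorial * k.factorial * (n-(j+k)).factorial)
          = n.choose (j+k) * ((j+k).choose j * j.factorial * k.factorial) *
              (n-(j+k)).factorial := by ring
        _ = n.choose (j+k) * (j+k).factorial * (n-(j+k)).factorial := by rw [h2]
        _ = n.factorial := h1
    simp only
    congr 1
    rw [e, div_eq_iff (by positivity)]
    exact_mod_cast hnat.symm
  rw [step1, sum_tri n (fun m a => (((n.choose m * m.choose a : ℕ) : ℝ)) ^ 2)]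
  have cast1 : ∑ m ∈ range (n+1), ∑ a ∈ range (m+1),
        (((n.choose m * m.choose a : ℕ) : ℝ)) ^ 2
      = ((∑ m ∈ range (n+1), ∑ a ∈ range (m+1), (n.choose m * m.choose a)^2 : ℕ) : ℝ) := by
    push_cast; ring
  rw [cast1, main_nat]
  push_cast
  refine sum_congr rfl fun k _ => ?_
  unfold cubeSum
  push_cast
  ring

lemma cubeSum_nonneg (k : ℕ) : 0 ≤ cubeSum k :=
  Finset.sum_nonneg fun j _ => by positivity

lemma cubeSum_le (k : ℕ) : cubeSum k ≤ 8 ^ k := by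
  have hS := Nat.sum_range_choose k
  have hN : (∑ j ∈ range (k+1), k.choose j ^ 3) ≤ 8 ^ k := by
    have hb : ∀ j ∈ range (k+1), k.choose j ^ 3 ≤ k.choose j * (2^k)^2 := by
      intro j hj
      have h1 : k.choose j ≤ 2 ^ k := by
        calc k.choose j ≤ ∑ i ∈ range (k+1), k.choose i :=
              Finset.single_le_sum (fun i _ => Nat.zero_le _) hj
          _ = 2^k := hS
      calc k.choose j ^ 3 = k.choose j * (k.choose j)^2 := by ring
        _ ≤ k.choose j * (2^k)^2 := Nat.mul_le_mul_left _ (Nat.pow_le_pow_left h1 2)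
    calc (∑ j ∈ range (k+1), k.choose j ^ 3)
        ≤ ∑ j ∈ range (k+1), k.choose j * (2^k)^2 := Finset.sum_le_sum hb
      _ = (∑ j ∈ range (k+1), k.choose j) * (2^k)^2 := by rw [← Finset.sum_mul]
      _ = 2^k * (2^k)^2 := by rw [hS]
      _ = 8^k := by
          rw [← pow_mul 2 k 2, ← pow_add, show (8:ℕ) = 2^3 from rfl, ← pow_mul]
          congr 1
          omega
  have hcast : cubeSum k = ((∑ j ∈ range (k+1), k.choose j ^ 3 : ℕ) : ℝ) := by
    unfold cubeSum; push_cast; rfl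
  rw [hcast]
  exact_mod_cast hN

lemma hasSum_aux {x : ℝ} (hx : |x| < 1) (k : ℕ) :
    HasSum (fun n => if k ≤ n then (n.choose k : ℝ) * x ^ n else 0)
      (x ^ k / (1 - x) ^ (k+1)) := by
  have h := (hasSum_choose_mul_geometric_of_norm_lt_one k
      (show ‖x‖ < 1 by rwa [Real.norm_eq_abs])).mul_left (x ^ k)
  have h2 : (fun n => x^k * (((n+k).choose k : ℝ) * x^n))
      = fun n => (if k ≤ n + k then ((n+k).choose k : ℝ) * x^(n+k) else 0) := by
    funext n
    rw [if_pos (Nat.le_add_left k n), pow_add]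
    ring
  rw [h2] at h
  have h4 := (hasSum_nat_add_iff
    (f := fun n => if k ≤ n then (n.choose k : ℝ) * x ^ n else 0) k).mp h
  have hz : ∑ i ∈ range k, (if k ≤ i then (i.choose k:ℝ) * x^i else 0) = 0 :=
    Finset.sum_eq_zero fun i hi =>
      if_neg (by rw [Finset.mem_range] at hi; omega)
  rw [hz, add_zero] at h4
  rw [mul_one_div] at h4
  exact h4

noncomputable def Fa (x : ℝ) (p : ℕ × ℕ) : ℝ :=
  if p.2 ≤ p.1 then (p.1.choose p.2 : ℝ) * cubeSum p.2 * x ^ p.1 else 0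

noncomputable def Ga (x : ℝ) (p : ℕ × ℕ) : ℝ :=
  if p.2 ≤ p.1 then (p.1.choose p.2 : ℝ) * 8 ^ p.2 * |x| ^ p.1 else 0

lemma Fa_apply (x : ℝ) (n k : ℕ) :
    Fa x (n, k) = if k ≤ n then (n.choose k : ℝ) * cubeSum k * x ^ n else 0 := rfl

lemma Ga_apply (x : ℝ) (n k : ℕ) :
    Ga x (n, k) = if k ≤ n then (n.choose k : ℝ) * 8 ^ k * |x| ^ n else 0 := rfl

lemma Ga_summable {x : ℝ} (hx : |x| < 1/10) : Summable (Ga x) := by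
  have hGnn : 0 ≤ Ga x := by
    intro p
    unfold Ga
    by_cases h : p.2 ≤ p.1 <;> simp only [h, ite_true, ite_false] <;> positivity
  rw [summable_prod_of_nonneg hGnn]
  constructor
  · intro n
    apply summable_of_ne_finset_zero (s := range (n+1))
    intro k hk
    rw [Ga_apply]
    exact if_neg (by rw [Finset.mem_range] at hk; omega)
  · apply Summable.congr (f := fun n => (9 * |x|)^n)
    · exact summable_geometric_of_lt_one (by positivity) (by linarith [abs_nonneg x])
    · intro n
      rw [tsum_eq_sum (s := range (n+1))
        (fun k hk => by
          rw [Ga_apply]; exact if_neg (by rw [Finset.mem_range] at hk; omega))]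
      have h1 : ∀ k ∈ range (n+1), Ga x (n, k) = (n.choose k : ℝ) * 8^k * |x|^n := by
        intro k hk
        rw [Finset.mem_range, Nat.lt_succ_iff] at hk
        rw [Ga_apply]
        exact if_pos hk
      rw [Finset.sum_congr rfl h1, ← Finset.sum_mul]
      have h9 : ∑ k ∈ range (n+1), (n.choose k : ℝ) * 8^k = 9^n := by
        have h8 := add_pow (8:ℝ) 1 n
        simp only [one_pow, mul_one] at h8
        rw [show (9:ℝ) = 8 + 1 from by norm_num, h8]
        exact Finset.sum_congr rfl fun k _ => by ring
      rw [mul_pow, h9]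

lemma Fa_summable {x : ℝ} (hx : |x| < 1/10) : Summable (Fa x) := by
  apply Summable.of_norm_bounded (Ga_summable hx)
  rintro ⟨n, k⟩
  rw [Fa_apply, Ga_apply]
  by_cases h : k ≤ n
  · simp only [h, ite_true]
    rw [Real.norm_eq_abs, abs_mul, abs_mul, abs_pow, Nat.abs_cast,
      abs_of_nonneg (cubeSum_nonneg _)]
    gcongr
    exact cubeSum_le _
  · simp only [h, ite_false, norm_zero, le_refl]

set_option maxHeartbeats 1000000 in
theorem stmt0 :
    ∀ᶠ x : ℝ in nhds 0,
      (∑' n : ℕ, trinomialSq n * x ^ n)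
        = (1 / (1 - x)) * ∑' n : ℕ, cubeSum n * (x / (1 - x)) ^ n := by
  have hball : ∀ x : ℝ, |x| < (1:ℝ)/10 →
      (∑' n : ℕ, trinomialSq n * x ^ n)
        = (1 / (1 - x)) * ∑' n : ℕ, cubeSum n * (x / (1 - x)) ^ n := by
    intro x hx
    have hx1 : |x| < 1 := lt_trans hx (by norm_num)
    have hxne : (1:ℝ) - x ≠ 0 := by
      intro h
      have := (abs_lt.1 hx1).2
      have : x = 1 := by linarith [sub_eq_zero.1 h]
      linarith [(abs_lt.1 hx1).2]
    have hFsum := Fa_summable hx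
    have hrow : ∀ n, trinomialSq n * x^n = ∑' k, Fa x (n, k) := by
      intro n
      rw [tsum_eq_sum (s := range (n+1))
        (fun k hk => by
          rw [Fa_apply]; exact if_neg (by rw [Finset.mem_range] at hk; omega))]
      rw [trinomialSq_eq, Finset.sum_mul]
      refine Finset.sum_congr rfl fun k hk => ?_
      rw [Finset.mem_range, Nat.lt_succ_iff] at hk
      rw [Fa_apply, if_pos hk]
    have hcol : ∀ k, ∑' n, Fa x (n, k) = cubeSum k * (x^k / (1-x)^(k+1)) := by
      intro k
      have h1 : (fun n => Fa x (n,k))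
          = fun n => cubeSum k * (if k ≤ n then (n.choose k:ℝ) * x^n else 0) := by
        funext n
        rw [Fa_apply]
        by_cases h : k ≤ n
        · simp only [h, ite_true]; ring
        · simp only [h, ite_false, mul_zero]
      rw [h1, tsum_mul_left, (hasSum_aux hx1 k).tsum_eq]
    have huncurry : Summable (Function.uncurry fun n k => Fa x (n, k)) :=
      hFsum.congr fun p => rfl
    have hcomm : ∑' (k) (n : ℕ), Fa x (n, k) = ∑' (n) (k : ℕ), Fa x (n, k) :=
      Summable.tsum_comm (f := fun n k => Fa x (n, k)) huncurry
    calc ∑' n, trinomialSq n * x^n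
        = ∑' n, ∑' k, Fa x (n,k) := tsum_congr hrow
      _ = ∑' p, Fa x p := (Summable.tsum_prod hFsum).symm
      _ = ∑' k, ∑' n, Fa x (n,k) := (Summable.tsum_prod hFsum).trans hcomm.symm
      _ = ∑' k, cubeSum k * (x^k / (1-x)^(k+1)) := tsum_congr hcol
      _ = (1 / (1-x)) * ∑' k, cubeSum k * (x / (1-x))^k := by
          rw [← tsum_mul_left]
          refine tsum_congr fun k => ?_
          rw [div_pow, pow_succ, ← div_div]
          ring
  have hmem : Metric.ball (0:ℝ) (1/10) ∈ nhds (0:ℝ) := Metric.ball_mem_nhds _ (by norm_num)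
  filter_upwards [hmem] with x hx
  exact hball x (by simpa [Real.dist_eq] using hx)
end

section
/- Let g(x) = ∑_{n≥0} (∑_{j=0}^{n} C(n,j)³) xⁿ and f(x) = ∑_{n≥0} (∑_{j+k+ℓ=n} (n!/(j!k!ℓ!))²) xⁿ. Then for x in a neighborhood of 0, g(x) = (1/(1+x))·f(x/(1+x)). -/
open scoped BigOperators

set_option maxHeartbeats 1000000

open Finset MvPolynomial

abbrev MP := MvPolynomial (Fin 3) ℕ

noncomputable def fin3 (a b c : ℕ) : Fin 3 →₀ ℕ :=
  Finsupp.single 0 a + Finsupp.single 1 b + Finsupp.single 2 c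

lemma fin3_apply0 (a b c : ℕ) : fin3 a b c 0 = a := by
  simp [fin3, Finsupp.single_apply]
lemma fin3_apply1 (a b c : ℕ) : fin3 a b c 1 = b := by
  simp [fin3, Finsupp.single_apply]
lemma fin3_apply2 (a b c : ℕ) : fin3 a b c 2 = c := by
  simp [fin3, Finsupp.single_apply]

lemma fin3_eq_iff {a b c a' b' c' : ℕ} :
    fin3 a b c = fin3 a' b' c' ↔ a = a' ∧ b = b' ∧ c = c' := by
  constructor
  · intro h
    refine ⟨?_, ?_, ?_⟩
    · rw [← fin3_apply0 a b c, h, fin3_apply0]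
    · rw [← fin3_apply1 a b c, h, fin3_apply1]
    · rw [← fin3_apply2 a b c, h, fin3_apply2]
  · rintro ⟨rfl, rfl, rfl⟩; rfl

lemma fin3_add (a b c a' b' c' : ℕ) :
    fin3 a b c + fin3 a' b' c' = fin3 (a + a') (b + b') (c + c') := by
  simp only [fin3, Finsupp.single_add]; abel

lemma mono_eq (a b c : ℕ) :
    (X 0 : MP) ^ a * X 1 ^ b * X 2 ^ c = monomial (fin3 a b c) 1 := by
  rw [X_pow_eq_monomial, X_pow_eq_monomial, X_pow_eq_monomial, monomial_mul, monomial_mul]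
  simp [fin3]

lemma coeff_mono (a b c t₀ t₁ t₂ : ℕ) :
    coeff (fin3 t₀ t₁ t₂) ((X 0 : MP) ^ a * X 1 ^ b * X 2 ^ c)
      = if a = t₀ ∧ b = t₁ ∧ c = t₂ then 1 else 0 := by
  rw [mono_eq, coeff_monomial]
  simp [fin3_eq_iff]

lemma expand_tri (x y z : MP) (n : ℕ) :
    (x + y + z) ^ n
      = ∑ j ∈ range (n + 1), ∑ k ∈ range (n + 1 - j),
          (x ^ j * y ^ k * z ^ (n - j - k)) * ((n.choose j * (n - j).choose k : ℕ) : MP) := by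
  rw [add_assoc, add_pow]
  refine Finset.sum_congr rfl fun j hj => ?_
  have hjn : j ≤ n := by simpa using Nat.lt_succ_iff.mp (Finset.mem_range.mp hj)
  rw [add_pow, Finset.mul_sum, Finset.sum_mul]
  have : n + 1 - j = n - j + 1 := by omega
  rw [this]
  refine Finset.sum_congr rfl fun k hk => ?_
  push_cast
  ring_nf

def Cnat (n : ℕ) : ℕ := ∑ j ∈ range (n + 1), (n.choose j) ^ 3

def Tnat (n : ℕ) : ℕ :=
  ∑ j ∈ range (n + 1), ∑ k ∈ range (n + 1 - j), (n.choose j * (n - j).choose k) ^ 2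

lemma coeff_term (c : ℕ) (a b d t₀ t₁ t₂ : ℕ) :
    coeff (fin3 t₀ t₁ t₂) (((c : ℕ) : MP) * (X 0 ^ a * X 1 ^ b * X 2 ^ d))
      = if a = t₀ ∧ b = t₁ ∧ d = t₂ then c else 0 := by
  rw [← C_eq_coe_nat, coeff_C_mul, coeff_mono]
  split <;> simp

lemma lemB (r : ℕ) :
    coeff (fin3 r r r) ((((X 0 + X 1) * (X 1 + X 2) * (X 2 + X 0) : MP)) ^ r) = Cnat r := by
  rw [mul_pow, mul_pow, add_pow, add_pow, add_pow]
  simp only [Finset.sum_mul, Finset.mul_sum, MvPolynomial.coeff_sum]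
  have step : ∀ a ∈ range (r+1), ∀ b ∈ range (r+1), ∀ d ∈ range (r+1),
      coeff (fin3 r r r)
        (X 0 ^ a * X 1 ^ (r - a) * ((r.choose a : ℕ) : MP) *
          (X 1 ^ b * X 2 ^ (r - b) * ((r.choose b : ℕ) : MP)) *
          (X 2 ^ d * X 0 ^ (r - d) * ((r.choose d : ℕ) : MP)))
      = if a + (r - d) = r ∧ (r - a) + b = r ∧ (r - b) + d = r
          then r.choose a * r.choose b * r.choose d else 0 := by
    intro a _ b _ d _
    have he : (X 0 ^ a * X 1 ^ (r - a) * ((r.choose a : ℕ) : MP) *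
          (X 1 ^ b * X 2 ^ (r - b) * ((r.choose b : ℕ) : MP)) *
          (X 2 ^ d * X 0 ^ (r - d) * ((r.choose d : ℕ) : MP)))
        = ((r.choose a * r.choose b * r.choose d : ℕ) : MP) *
          (X 0 ^ (a + (r - d)) * X 1 ^ ((r - a) + b) * X 2 ^ ((r - b) + d)) := by
      push_cast; ring
    rw [he, coeff_term]
  calc (∑ d ∈ range (r+1), ∑ b ∈ range (r+1), ∑ a ∈ range (r+1),
        coeff (fin3 r r r)
        (X 0 ^ a * X 1 ^ (r - a) * ((r.choose a : ℕ) : MP) *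
          (X 1 ^ b * X 2 ^ (r - b) * ((r.choose b : ℕ) : MP)) *
          (X 2 ^ d * X 0 ^ (r - d) * ((r.choose d : ℕ) : MP))))
      = ∑ d ∈ range (r+1), (r.choose d)^3 := by
        refine Finset.sum_congr rfl fun d hd => ?_
        have hdd : d ≤ r := Nat.lt_succ_iff.mp (Finset.mem_range.mp hd)
        rw [Finset.sum_eq_single_of_mem d hd, Finset.sum_eq_single_of_mem d hd]
        · rw [step d hd d hd d hd, if_pos (by omega)]; ring
        · intro a ha haa
          have har : a ≤ r := Nat.lt_succ_iff.mp (Finset.mem_range.mp ha)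
          rw [step a ha d hd d hd, if_neg (by omega)]
        · intro b hb hbd
          have hbr : b ≤ r := Nat.lt_succ_iff.mp (Finset.mem_range.mp hb)
          rw [Finset.sum_eq_zero]
          intro a ha
          have har : a ≤ r := Nat.lt_succ_iff.mp (Finset.mem_range.mp ha)
          rw [step a ha b hb d hd, if_neg (by omega)]
    _ = Cnat r := rfl

lemma lemC (n : ℕ) :
    coeff (fin3 n n n) ((((X 0 + X 1 + X 2) * (X 0 * X 1 + X 1 * X 2 + X 2 * X 0) : MP)) ^ n)
      = Tnat n := by
  rw [mul_pow, expand_tri, expand_tri]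
  simp only [Finset.sum_mul, Finset.mul_sum, MvPolynomial.coeff_sum]
  have step : ∀ j, j ≤ n → ∀ k, k ≤ n - j → ∀ p, p ≤ n → ∀ q, q ≤ n - p →
      coeff (fin3 n n n)
        ((X 0 ^ j * X 1 ^ k * X 2 ^ (n - j - k)) * ((n.choose j * (n - j).choose k : ℕ) : MP) *
          (((X 0 * X 1) ^ p * (X 1 * X 2) ^ q * (X 2 * X 0) ^ (n - p - q)) *
            ((n.choose p * (n - p).choose q : ℕ) : MP)))
      = if j + (p + (n - p - q)) = n ∧ k + (p + q) = n ∧ (n - j - k) + (q + (n - p - q)) = n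
          then (n.choose j * (n - j).choose k) * (n.choose p * (n - p).choose q) else 0 := by
    intro j hj k hk p hp q hq
    have he : (X 0 ^ j * X 1 ^ k * X 2 ^ (n - j - k)) * ((n.choose j * (n - j).choose k : ℕ) : MP) *
          (((X 0 * X 1) ^ p * (X 1 * X 2) ^ q * (X 2 * X 0) ^ (n - p - q)) *
            ((n.choose p * (n - p).choose q : ℕ) : MP))
        = (((n.choose j * (n - j).choose k) * (n.choose p * (n - p).choose q) : ℕ) : MP) *
          (X 0 ^ (j + (p + (n - p - q))) * X 1 ^ (k + (p + q)) * X 2 ^ ((n - j - k) + (q + (n - p - q)))) := by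
      push_cast; ring
    rw [he, coeff_term]
  calc (∑ p ∈ range (n+1), ∑ q ∈ range (n+1-p), ∑ j ∈ range (n+1), ∑ k ∈ range (n+1-j),
        coeff (fin3 n n n)
        ((X 0 ^ j * X 1 ^ k * X 2 ^ (n - j - k)) * ((n.choose j * (n - j).choose k : ℕ) : MP) *
          (((X 0 * X 1) ^ p * (X 1 * X 2) ^ q * (X 2 * X 0) ^ (n - p - q)) *
            ((n.choose p * (n - p).choose q : ℕ) : MP))))
      = ∑ p ∈ range (n+1), ∑ q ∈ range (n+1-p), (n.choose p * (n - p).choose q)^2 := by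
        refine Finset.sum_congr rfl fun p hp => ?_
        have hpn : p ≤ n := Nat.lt_succ_iff.mp (Finset.mem_range.mp hp)
        refine Finset.sum_congr rfl fun q hq => ?_
        have hqn : q ≤ n - p := Nat.lt_succ_iff.mp (by
          have := Finset.mem_range.mp hq; omega)
        have hjmem : q ∈ range (n+1) := Finset.mem_range.mpr (by omega)
        rw [Finset.sum_eq_single_of_mem q hjmem]
        · have hkmem : n - p - q ∈ range (n + 1 - q) := Finset.mem_range.mpr (by omega)
          rw [Finset.sum_eq_single_of_mem (n - p - q) hkmem]
          · rw [step q (by omega) (n-p-q) (by omega) p hpn q hqn, if_pos (by omega)]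
            have h1 := Nat.choose_mul (n := n) (show q ≤ p + q by omega)
            have h2 := Nat.choose_mul (n := n) (show p ≤ p + q by omega)
            have h3 := Nat.choose_symm (show p ≤ p + q by omega)
            rw [Nat.add_sub_cancel_left] at h3
            rw [Nat.add_sub_cancel] at h1
            rw [Nat.add_sub_cancel_left] at h2
            have h4 : (n - q).choose (n - p - q) = (n - q).choose p := by
              rw [show n - p - q = n - q - p by omega]
              exact Nat.choose_symm (by omega)
            have key2 : n.choose q * (n - q).choose (n - p - q)
                = n.choose p * (n - p).choose q := by
              rw [h4, ← h1, h3, h2]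
            rw [key2]; ring
          · intro k hk hkne
            have hkb : k ≤ n - q := Nat.lt_succ_iff.mp (by
              have := Finset.mem_range.mp hk; omega)
            rw [step q (by omega) k (by omega) p hpn q hqn, if_neg (by omega)]
        · intro j hj hjne
          have hjb : j ≤ n := Nat.lt_succ_iff.mp (Finset.mem_range.mp hj)
          rw [Finset.sum_eq_zero]
          intro k hk
          have hkb : k ≤ n - j := Nat.lt_succ_iff.mp (by
            have := Finset.mem_range.mp hk; omega)
          rw [step j hjb k hkb p hpn q hqn, if_neg (by omega)]
    _ = Tnat n := rfl

theorem key (n : ℕ) : Tnat n = ∑ m ∈ range (n + 1), n.choose m * Cnat m := by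
  have base : ((X 0 + X 1 + X 2) * (X 0 * X 1 + X 1 * X 2 + X 2 * X 0) : MP)
      = X 0 * X 1 * X 2 + (X 0 + X 1) * (X 1 + X 2) * (X 2 + X 0) := by ring
  have main : Tnat n = ∑ m ∈ range (n + 1), n.choose m * Cnat (n - m) := by
    calc Tnat n
        = coeff (fin3 n n n) ((((X 0 + X 1 + X 2) * (X 0 * X 1 + X 1 * X 2 + X 2 * X 0) : MP)) ^ n) :=
          (lemC n).symm
      _ = coeff (fin3 n n n)
            ((X 0 * X 1 * X 2 + (X 0 + X 1) * (X 1 + X 2) * (X 2 + X 0) : MP) ^ n) := by rw [base]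
      _ = ∑ m ∈ range (n + 1), coeff (fin3 n n n)
            (((X 0 * X 1 * X 2 : MP)) ^ m * ((X 0 + X 1) * (X 1 + X 2) * (X 2 + X 0)) ^ (n - m)
              * ((n.choose m : ℕ) : MP)) := by
          rw [add_pow, MvPolynomial.coeff_sum]
      _ = ∑ m ∈ range (n + 1), n.choose m * Cnat (n - m) := by
          refine Finset.sum_congr rfl fun m hm => ?_
          have hmn : m ≤ n := Nat.lt_succ_iff.mp (Finset.mem_range.mp hm)
          have hmono : ((X 0 * X 1 * X 2 : MP)) ^ m = monomial (fin3 m m m) 1 := by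
            rw [← mono_eq]; ring
          have hterm : (((X 0 * X 1 * X 2 : MP)) ^ m
                * ((X 0 + X 1) * (X 1 + X 2) * (X 2 + X 0)) ^ (n - m) * ((n.choose m : ℕ) : MP))
              = monomial (fin3 m m m) 1 *
                (((n.choose m : ℕ) : MP) * ((X 0 + X 1) * (X 1 + X 2) * (X 2 + X 0)) ^ (n - m)) := by
            rw [hmono]; ring
          have hsplit : fin3 n n n = fin3 m m m + fin3 (n - m) (n - m) (n - m) := by
            rw [fin3_add]
            exact (fin3_eq_iff.mpr ⟨by omega, by omega, by omega⟩).symm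
          rw [hterm, hsplit, coeff_monomial_mul, one_mul, ← C_eq_coe_nat, coeff_C_mul, lemB]
          simp
  rw [main, ← Finset.sum_range_reflect]
  refine Finset.sum_congr rfl fun j hj => ?_
  have hjn : j ≤ n := Nat.lt_succ_iff.mp (Finset.mem_range.mp hj)
  rw [show n + 1 - 1 - j = n - j by omega, Nat.choose_symm hjn, show n - (n - j) = j by omega]

lemma choose_le_two_pow' (n k : ℕ) : n.choose k ≤ 2 ^ n := by
  rcases le_or_gt k n with h | h
  · calc n.choose k ≤ ∑ i ∈ range (n + 1), n.choose i :=
        Finset.single_le_sum (fun i _ => Nat.zero_le _) (Finset.mem_range.mpr (by omega))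
      _ = 2 ^ n := Nat.sum_range_choose n
  · simp [Nat.choose_eq_zero_of_lt h]

lemma Tnat_le (n : ℕ) : Tnat n ≤ 64 ^ n := by
  have hterm : ∀ j k : ℕ, n.choose j * (n - j).choose k ≤ 4 ^ n := by
    intro j k
    calc n.choose j * (n - j).choose k ≤ 2 ^ n * 2 ^ (n - j) :=
          Nat.mul_le_mul (choose_le_two_pow' n j) (choose_le_two_pow' (n - j) k)
      _ ≤ 2 ^ n * 2 ^ n := Nat.mul_le_mul_left _ (Nat.pow_le_pow_right (by norm_num) (by omega))
      _ = 4 ^ n := by rw [← Nat.mul_pow]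
  calc Tnat n ≤ ∑ j ∈ range (n + 1), ∑ k ∈ range (n + 1 - j), 16 ^ n := by
        refine Finset.sum_le_sum fun j _ => Finset.sum_le_sum fun k _ => ?_
        calc (n.choose j * (n - j).choose k) ^ 2 ≤ (4 ^ n) ^ 2 :=
              Nat.pow_le_pow_left (hterm j k) 2
          _ = 16 ^ n := by rw [← pow_mul, mul_comm, pow_mul]; norm_num
    _ ≤ ∑ j ∈ range (n + 1), (n + 1) * 16 ^ n := by
        refine Finset.sum_le_sum fun j _ => ?_
        rw [Finset.sum_const, Finset.card_range, smul_eq_mul]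
        exact Nat.mul_le_mul_right _ (by omega)
    _ = (n + 1) * ((n + 1) * 16 ^ n) := by
        rw [Finset.sum_const, Finset.card_range, smul_eq_mul]
    _ ≤ 2 ^ n * (2 ^ n * 16 ^ n) := by
        have h2 : n + 1 ≤ 2 ^ n := Nat.lt_two_pow_self
        exact Nat.mul_le_mul h2 (Nat.mul_le_mul_right _ h2)
    _ = 64 ^ n := by rw [← Nat.mul_pow, ← Nat.mul_pow]

lemma cubeSum_eq (n : ℕ) : cubeSum n = (Cnat n : ℝ) := by
  unfold cubeSum Cnat; push_cast; rfl

lemma trinomialSq_eq_s1 (n : ℕ) : trinomialSq n = (Tnat n : ℝ) := by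
  unfold trinomialSq Tnat
  push_cast
  refine Finset.sum_congr rfl fun j hj => Finset.sum_congr rfl fun k hk => ?_
  have hjn : j ≤ n := Nat.lt_succ_iff.mp (Finset.mem_range.mp hj)
  have hkn : k ≤ n - j := Nat.lt_succ_iff.mp (by
    have := Finset.mem_range.mp hk; omega)
  congr 1
  have e1 : (n.choose j : ℝ) * j.factorial * (n - j).factorial = n.factorial := by
    exact_mod_cast Nat.choose_mul_factorial_mul_factorial hjn
  have e2 : ((n - j).choose k : ℝ) * k.factorial * (n - j - k).factorial
      = (n - j).factorial := by
    exact_mod_cast Nat.choose_mul_factorial_mul_factorial hkn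
  have hpos : ((j.factorial : ℝ) * k.factorial * (n - j - k).factorial) ≠ 0 := by
    positivity
  rw [div_eq_iff hpos]
  linear_combination -e1 - ((n.choose j : ℝ) * (j.factorial : ℝ)) * e2

lemma hasSum_choose_geom {y : ℝ} (hy : |y| < 1 / 2) :
    ∀ k : ℕ, HasSum (fun m => (m.choose k : ℝ) * y ^ m) (y ^ k / (1 - y) ^ (k + 1)) := by
  have hy' := abs_lt.mp hy
  have hy1 : |y| < 1 := by linarith [abs_nonneg y]
  have h1y : (1 : ℝ) - y ≠ 0 := by
    intro h; rw [sub_eq_zero] at h; rw [← h] at hy'; linarith [hy'.2]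
  intro k
  induction k with
  | zero =>
    simpa [one_div] using hasSum_geometric_of_abs_lt_one hy1
  | succ k ih =>
    have hsum : Summable (fun m => ((m.choose (k + 1) : ℝ)) * y ^ m) := by
      apply Summable.of_norm
      refine Summable.of_nonneg_of_le (fun m => norm_nonneg _) (fun m => ?_)
        (summable_geometric_of_lt_one (r := 2 * |y|) (by positivity) (by linarith [abs_nonneg y]))
      rw [norm_mul, norm_pow, Real.norm_eq_abs, Real.norm_eq_abs, Nat.abs_cast]
      calc (m.choose (k + 1) : ℝ) * |y| ^ m ≤ (2 ^ m : ℝ) * |y| ^ m := by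
            gcongr
            exact_mod_cast choose_le_two_pow' m (k + 1)
        _ = (2 * |y|) ^ m := by rw [mul_pow]
    set S := ∑' m : ℕ, ((m.choose (k + 1) : ℝ)) * y ^ m with hSdef
    have h0 : S = 0 + ∑' m : ℕ, (((m + 1).choose (k + 1) : ℝ)) * y ^ (m + 1) := by
      rw [hSdef, Summable.tsum_eq_zero_add hsum]
      norm_num
    have hsplit : (fun m : ℕ => (((m + 1).choose (k + 1) : ℝ)) * y ^ (m + 1))
        = fun m : ℕ => y * ((m.choose k : ℝ) * y ^ m) + y * ((m.choose (k + 1) : ℝ) * y ^ m) := by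
      funext m; rw [Nat.choose_succ_succ]; push_cast; ring
    have h2 : ∑' m : ℕ, (((m + 1).choose (k + 1) : ℝ)) * y ^ (m + 1)
        = y * (y ^ k / (1 - y) ^ (k + 1)) + y * S := by
      rw [hsplit, Summable.tsum_add ((ih.summable).mul_left y) (hsum.mul_left y),
        tsum_mul_left, tsum_mul_left, ih.tsum_eq]
    have heq : S = y * (y ^ k / (1 - y) ^ (k + 1)) + y * S :=
      h0.trans (by rw [h2, zero_add])
    have h3 : S * (1 - y) = y * (y ^ k / (1 - y) ^ (k + 1)) := by linear_combination heq
    have hval : S = y ^ (k + 1) / (1 - y) ^ (k + 2) := by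
      have h4 : S = y * (y ^ k / (1 - y) ^ (k + 1)) / (1 - y) := by
        rw [← h3]; field_simp
      rw [h4, pow_succ, pow_succ]
      field_simp
      ring
    exact (hsum.hasSum_iff).mpr hval

theorem stmt1 :
    ∀ᶠ x : ℝ in nhds 0,
      (∑' n : ℕ, cubeSum n * x ^ n)
        = (1 / (1 + x)) * ∑' n : ℕ, trinomialSq n * (x / (1 + x)) ^ n := by
  have hball : Metric.ball (0 : ℝ) (1 / 100) ∈ nhds 0 := Metric.ball_mem_nhds _ (by norm_num)
  filter_upwards [hball] with x hx
  rw [Metric.mem_ball, Real.dist_eq, sub_zero] at hx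
  have hx' := abs_lt.mp hx
  set y := x / (1 + x) with hydef
  have h1xpos : (0 : ℝ) < 1 + x := by linarith [hx'.1]
  have h1x0 : (1 : ℝ) + x ≠ 0 := ne_of_gt h1xpos
  have hyabs : |y| < 1 / 99 := by
    rw [hydef, abs_div, abs_of_pos h1xpos, div_lt_iff₀ h1xpos]
    nlinarith [abs_nonneg x, hx'.1, hx'.2, hx]
  have h1y : (1 : ℝ) - y = 1 / (1 + x) := by
    rw [hydef]; field_simp; ring
  set f : ℕ → ℕ → ℝ := fun m k => (Cnat k : ℝ) * ((m.choose k : ℝ) * y ^ m) with hfdef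
  -- row sums
  have hWsum : ∀ (z : ℝ) (m : ℕ),
      ∑' k : ℕ, (Cnat k : ℝ) * ((m.choose k : ℝ) * z ^ m) = (Tnat m : ℝ) * z ^ m := by
    intro z m
    rw [tsum_eq_sum (s := range (m + 1)) (f := fun k => (Cnat k : ℝ) * ((m.choose k : ℝ) * z ^ m))
        (fun k hk => by
          have : m < k := by
            by_contra h
            exact hk (Finset.mem_range.mpr (by omega))
          simp [Nat.choose_eq_zero_of_lt this])]
    rw [key m]
    push_cast
    rw [Finset.sum_mul]
    exact Finset.sum_congr rfl fun k _ => by ring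
  -- summability of the absolute double family
  have hT : Summable (fun m : ℕ => (Tnat m : ℝ) * |y| ^ m) := by
    refine Summable.of_nonneg_of_le (fun m => by positivity) (fun m => ?_)
      (summable_geometric_of_lt_one (r := 64 * |y|) (by positivity)
        (by linarith [abs_nonneg y]))
    calc (Tnat m : ℝ) * |y| ^ m ≤ (64 ^ m : ℝ) * |y| ^ m := by
          gcongr
          exact_mod_cast Tnat_le m
      _ = (64 * |y|) ^ m := by rw [mul_pow]
  have hG : Summable (fun p : ℕ × ℕ => (Cnat p.2 : ℝ) * ((p.1.choose p.2 : ℝ) * |y| ^ p.1)) := by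
    refine (summable_prod_of_nonneg (fun p => by positivity)).mpr ⟨fun m => ?_, ?_⟩
    · refine summable_of_ne_finset_zero (s := range (m + 1)) fun k hk => ?_
      have : m < k := by
        by_contra h
        exact hk (Finset.mem_range.mpr (by omega))
      simp [Nat.choose_eq_zero_of_lt this]
    · exact hT.congr fun m => (hWsum |y| m).symm
  have hF : Summable (Function.uncurry f) := by
    apply Summable.of_norm
    refine hG.congr fun p => ?_
    obtain ⟨m, k⟩ := p
    simp only [Function.uncurry, hfdef, Real.norm_eq_abs, abs_mul, abs_pow, Nat.abs_cast]
  have hS : ∀ k : ℕ, HasSum (fun m => (m.choose k : ℝ) * y ^ m)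
      (y ^ k / (1 - y) ^ (k + 1)) :=
    hasSum_choose_geom (by linarith [abs_nonneg y])
  have e1 : ∑' m : ℕ, trinomialSq m * y ^ m = ∑' m : ℕ, ∑' k : ℕ, f m k := by
    refine tsum_congr fun m => ?_
    rw [trinomialSq_eq_s1, ← hWsum y m]
  have e2 : ∑' m : ℕ, ∑' k : ℕ, f m k = ∑' k : ℕ, ∑' m : ℕ, f m k := (Summable.tsum_comm hF).symm
  have e3 : ∀ k : ℕ, ∑' m : ℕ, f m k = (Cnat k : ℝ) * (y ^ k / (1 - y) ^ (k + 1)) := by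
    intro k
    rw [hfdef]
    rw [tsum_mul_left, (hS k).tsum_eq]
  calc (∑' n : ℕ, cubeSum n * x ^ n) = ∑' k : ℕ, (Cnat k : ℝ) * x ^ k :=
        tsum_congr fun n => by rw [cubeSum_eq]
    _ = ∑' k : ℕ, (1 / (1 + x)) * ((Cnat k : ℝ) * (y ^ k / (1 - y) ^ (k + 1))) := by
        refine tsum_congr fun k => ?_
        rw [h1y, hydef]
        rw [div_pow, one_div_pow, pow_succ]
        field_simp
    _ = (1 / (1 + x)) * ∑' k : ℕ, (Cnat k : ℝ) * (y ^ k / (1 - y) ^ (k + 1)) :=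
        tsum_mul_left
    _ = (1 / (1 + x)) * ∑' n : ℕ, trinomialSq n * y ^ n := by
        rw [e1, e2, tsum_congr e3]
end

section
/- For every nonnegative integer n, ∑_{j+k+ℓ=n} (n!/(j!k!ℓ!))² = ∑_{j=0}^{n} C(n,j)² C(2j,j), where the left sum is over nonnegative integers j,k,ℓ with j+k+ℓ=n. -/
open scoped BigOperators

lemma central_sq (m : ℕ) :
    ∑ k ∈ Finset.range (m + 1), (m.choose k) ^ 2 = (2 * m).choose m := by
  rw [two_mul, Nat.add_choose_eq,
    Finset.Nat.sum_antidiagonal_eq_sum_range_succ (fun i j => m.choose i * m.choose j)]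
  refine Finset.sum_congr rfl fun k hk => ?_
  rw [Finset.mem_range] at hk
  rw [Nat.choose_symm (Nat.lt_succ_iff.mp hk), sq]

theorem stmt2 (n : ℕ) :
    (∑ j ∈ Finset.range (n + 1), ∑ k ∈ Finset.range (n + 1 - j),
        ((n.factorial : ℝ) / (j.factorial * k.factorial * (n - j - k).factorial)) ^ 2)
      = ∑ j ∈ Finset.range (n + 1), ((n.choose j : ℝ)) ^ 2 * ((2 * j).choose j : ℝ) := by
  have step : ∀ j ∈ Finset.range (n + 1),
      (∑ k ∈ Finset.range (n + 1 - j),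
        ((n.factorial : ℝ) / (j.factorial * k.factorial * (n - j - k).factorial)) ^ 2)
      = ((n.choose (n - j) : ℝ)) ^ 2 * ((2 * (n - j)).choose (n - j) : ℝ) := by
    intro j hj
    rw [Finset.mem_range, Nat.lt_succ_iff] at hj
    have h1 : ∀ k ∈ Finset.range (n + 1 - j),
        ((n.factorial : ℝ) / (j.factorial * k.factorial * (n - j - k).factorial))
        = (n.choose j : ℝ) * ((n - j).choose k : ℝ) := by
      intro k hk
      rw [Finset.mem_range] at hk
      have hk' : k ≤ n - j := by omega
      rw [Nat.cast_choose ℝ hj, Nat.cast_choose ℝ hk']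
      have f0 : ∀ m : ℕ, (m.factorial : ℝ) ≠ 0 := fun m => by
        exact_mod_cast m.factorial_ne_zero
      field_simp
    calc (∑ k ∈ Finset.range (n + 1 - j),
        ((n.factorial : ℝ) / (j.factorial * k.factorial * (n - j - k).factorial)) ^ 2)
        = ∑ k ∈ Finset.range (n - j + 1), ((n.choose j : ℝ) * ((n - j).choose k : ℝ)) ^ 2 := by
          rw [show n + 1 - j = n - j + 1 by omega]
          refine Finset.sum_congr rfl fun k hk => ?_
          rw [h1 k (by rwa [show n + 1 - j = n - j + 1 by omega])]
      _ = (n.choose j : ℝ) ^ 2 * ∑ k ∈ Finset.range (n - j + 1), (((n - j).choose k : ℕ) ^ 2 : ℝ) := by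
          rw [Finset.mul_sum]; exact Finset.sum_congr rfl fun k _ => by ring
      _ = (n.choose (n - j) : ℝ) ^ 2 * ((2 * (n - j)).choose (n - j) : ℝ) := by
          rw [Nat.choose_symm hj, ← central_sq (n - j)]
          push_cast
          ring
  rw [Finset.sum_congr rfl step]
  rw [← Finset.sum_range_reflect (fun j => ((n.choose j : ℝ)) ^ 2 * ((2 * j).choose j : ℝ)) (n + 1)]
  simp only [Nat.add_sub_cancel]
end

section
/- Define t(n) = ∑_{j=0}^{n} C(n,j)² C(2j,j). Then t satisfies the recurrence (n+1)² t(n+1) = (10n²+10n+3) t(n) − 9n² t(n−1) for all n ≥ 1, with t(0)=1 and t(1)=3. -/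
open scoped BigOperators

/-- `t(n) = ∑_{j=0}^n C(n,j)² C(2j,j)`. -/
def tseq (n : ℕ) : ℤ :=
  ∑ j ∈ Finset.range (n + 1), ((n.choose j : ℤ)) ^ 2 * ((2 * j).choose j : ℤ)

lemma rel1 (n j : ℕ) :
    ((n : ℤ) + 1 - j) * ((n + 1).choose j : ℤ) = ((n : ℤ) + 1) * (n.choose j : ℤ) := by
  rcases le_or_gt j (n + 1) with h | h
  · have := Nat.choose_mul_succ_eq n j
    have hc : ((n.choose j * (n + 1) : ℕ) : ℤ) = (((n + 1).choose j * (n + 1 - j) : ℕ) : ℤ) := by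
      exact_mod_cast congrArg (Nat.cast : ℕ → ℤ) this
    push_cast [Nat.cast_sub h] at hc
    linarith [hc]
  · rw [Nat.choose_eq_zero_of_lt h, Nat.choose_eq_zero_of_lt (by omega)]
    push_cast; ring

lemma rel2 (n j : ℕ) (hn : 1 ≤ n) :
    (n : ℤ) * ((n - 1).choose j : ℤ) = ((n : ℤ) - j) * (n.choose j : ℤ) := by
  obtain ⟨m, rfl⟩ : ∃ m, n = m + 1 := ⟨n - 1, by omega⟩
  simp only [Nat.add_sub_cancel]
  rcases le_or_gt j (m + 1) with h | h
  · have := Nat.choose_mul_succ_eq m j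
    have hc : ((m.choose j * (m + 1) : ℕ) : ℤ) = (((m + 1).choose j * (m + 1 - j) : ℕ) : ℤ) := by
      exact_mod_cast congrArg (Nat.cast : ℕ → ℤ) this
    push_cast [Nat.cast_sub h] at hc
    push_cast
    linarith [hc]
  · rw [Nat.choose_eq_zero_of_lt h, Nat.choose_eq_zero_of_lt (by omega)]
    push_cast; ring

lemma rel3 (n j : ℕ) :
    ((j : ℤ) + 1) * ((n + 1).choose (j + 1) : ℤ) = ((n : ℤ) + 1) * (n.choose j : ℤ) := by
  have := Nat.add_one_mul_choose_eq n j
  have hc : ((n : ℤ) + 1) * (n.choose j : ℤ) = ((n + 1).choose (j + 1) : ℤ) * ((j : ℤ) + 1) := by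
    exact_mod_cast this
  linarith [hc]

lemma rel4 (j : ℕ) :
    ((j : ℤ) + 1) ^ 2 * ((2 * (j + 1)).choose (j + 1) : ℤ)
      = (2 * (j : ℤ) + 2) * (2 * j + 1) * ((2 * j).choose j : ℤ) := by
  have s1 := Nat.add_one_mul_choose_eq (2 * j + 1) j
  have s2 := Nat.add_one_mul_choose_eq (2 * j) j
  have s3 : (2 * j + 1).choose j = (2 * j + 1).choose (j + 1) := by
    have := Nat.choose_symm (n := 2 * j + 1) (k := j + 1) (by omega)
    have h' : 2 * j + 1 - (j + 1) = j := by omega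
    rw [h'] at this
    exact this
  have h1 : ((2 * j + 2 : ℕ) : ℤ) * ((2 * j + 1).choose j : ℤ)
      = ((2 * (j + 1)).choose (j + 1) : ℤ) * ((j : ℤ) + 1) := by
    have : 2 * (j + 1) = Nat.succ (2 * j + 1) := by omega
    rw [this]
    exact_mod_cast congrArg (Nat.cast : ℕ → ℤ) s1
  have h2 : ((2 * j + 1 : ℕ) : ℤ) * ((2 * j).choose j : ℤ)
      = ((2 * j + 1).choose (j + 1) : ℤ) * ((j : ℤ) + 1) := by
    exact_mod_cast congrArg (Nat.cast : ℕ → ℤ) s2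
  rw [s3] at h1
  push_cast at h1 h2 ⊢
  nlinarith [h1, h2]

lemma relE1 (n j : ℕ) :
    ((j : ℤ) + 1) ^ 3 * ((n + 1).choose (j + 1) : ℤ) ^ 2 * ((2 * (j + 1)).choose (j + 1) : ℤ)
      = 2 * (2 * (j : ℤ) + 1) * ((n : ℤ) + 1) ^ 2 * (n.choose j : ℤ) ^ 2
          * ((2 * j).choose j : ℤ) := by
  have h3 := rel3 n j
  have h4 := rel4 j
  have hne : ((j : ℤ) + 1) ^ 2 ≠ 0 := pow_ne_zero 2 (by positivity)
  apply mul_left_cancel₀ hne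
  set a : ℤ := (n.choose j : ℤ)
  set d : ℤ := ((n + 1).choose (j + 1) : ℤ)
  set e : ℤ := ((2 * j).choose j : ℤ)
  set f : ℤ := ((2 * (j + 1)).choose (j + 1) : ℤ)
  linear_combination (((j : ℤ) + 1) ^ 4 * d * f + ((n : ℤ) + 1) * a * ((j : ℤ) + 1) ^ 3 * f) * h3
    + ((n : ℤ) + 1) ^ 2 * a ^ 2 * ((j : ℤ) + 1) * h4

/-- Per-term Zeilberger certificate identity. -/
lemma perterm (n j : ℕ) (hn : 1 ≤ n) :
    ((n : ℤ) + 1) ^ 4 * (((n + 1).choose j : ℤ) ^ 2 * ((2 * j).choose j : ℤ))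
      - ((n : ℤ) + 1) ^ 2 * (10 * (n : ℤ) ^ 2 + 10 * n + 3)
          * ((n.choose j : ℤ) ^ 2 * ((2 * j).choose j : ℤ))
      + 9 * (n : ℤ) ^ 2 * ((n : ℤ) + 1) ^ 2
          * (((n - 1).choose j : ℤ) ^ 2 * ((2 * j).choose j : ℤ))
      = (((j : ℤ) + 1) ^ 3 * (3 * ((j : ℤ) + 1) - 4 * n - 4)
            * ((n + 1).choose (j + 1) : ℤ) ^ 2 * ((2 * (j + 1)).choose (j + 1) : ℤ))
        - ((j : ℤ) ^ 3 * (3 * (j : ℤ) - 4 * n - 4)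
            * ((n + 1).choose j : ℤ) ^ 2 * ((2 * j).choose j : ℤ)) := by
  have h1 := rel1 n j
  have h2 := rel2 n j hn
  have hE := relE1 n j
  set x : ℤ := (n : ℤ)
  set y : ℤ := (j : ℤ)
  set a : ℤ := (n.choose j : ℤ)
  set b : ℤ := ((n + 1).choose j : ℤ)
  set c : ℤ := ((n - 1).choose j : ℤ)
  set d : ℤ := ((n + 1).choose (j + 1) : ℤ)
  set e : ℤ := ((2 * j).choose j : ℤ)
  set f : ℤ := ((2 * (j + 1)).choose (j + 1) : ℤ)
  linear_combination (-(3 * y - 4 * x - 1)) * hE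
    + (3 * y ^ 2 + 2 * y * (x + 1) + (x + 1) ^ 2) * e * ((x + 1 - y) * b + (x + 1) * a) * h1
    + 9 * (x + 1) ^ 2 * e * (x * c + (x - y) * a) * h2

theorem stmt3 :
    tseq 0 = 1 ∧ tseq 1 = 3 ∧
      ∀ n : ℕ, 1 ≤ n →
        ((n : ℤ) + 1) ^ 2 * tseq (n + 1)
          = (10 * (n : ℤ) ^ 2 + 10 * n + 3) * tseq n - 9 * (n : ℤ) ^ 2 * tseq (n - 1) := by
  refine ⟨by decide, by decide, ?_⟩
  intro n hn
  set Hf : ℕ → ℤ := fun k =>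
    (k : ℤ) ^ 3 * (3 * (k : ℤ) - 4 * n - 4) * ((n + 1).choose k : ℤ) ^ 2
      * ((2 * k).choose k : ℤ) with hHf
  have tel : ∑ j ∈ Finset.range (n + 2), (Hf (j + 1) - Hf j) = Hf (n + 2) - Hf 0 :=
    Finset.sum_range_sub Hf (n + 2)
  have hHtop : Hf (n + 2) = 0 := by
    simp [hHf, Nat.choose_eq_zero_of_lt (by omega : n + 1 < n + 2)]
  have hH0 : Hf 0 = 0 := by simp [hHf]
  have key : ∑ j ∈ Finset.range (n + 2),
      (((n : ℤ) + 1) ^ 4 * (((n + 1).choose j : ℤ) ^ 2 * ((2 * j).choose j : ℤ))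
        - ((n : ℤ) + 1) ^ 2 * (10 * (n : ℤ) ^ 2 + 10 * n + 3)
            * ((n.choose j : ℤ) ^ 2 * ((2 * j).choose j : ℤ))
        + 9 * (n : ℤ) ^ 2 * ((n : ℤ) + 1) ^ 2
            * (((n - 1).choose j : ℤ) ^ 2 * ((2 * j).choose j : ℤ))) = 0 := by
    have step : ∀ j : ℕ,
        ((n : ℤ) + 1) ^ 4 * (((n + 1).choose j : ℤ) ^ 2 * ((2 * j).choose j : ℤ))
          - ((n : ℤ) + 1) ^ 2 * (10 * (n : ℤ) ^ 2 + 10 * n + 3)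
              * ((n.choose j : ℤ) ^ 2 * ((2 * j).choose j : ℤ))
          + 9 * (n : ℤ) ^ 2 * ((n : ℤ) + 1) ^ 2
              * (((n - 1).choose j : ℤ) ^ 2 * ((2 * j).choose j : ℤ))
          = Hf (j + 1) - Hf j := by
      intro j
      simp only [hHf]
      push_cast
      linear_combination perterm n j hn
    rw [Finset.sum_congr rfl (fun j _ => step j), tel, hHtop, hH0, sub_zero]
  rw [Finset.sum_add_distrib, Finset.sum_sub_distrib, ← Finset.mul_sum, ← Finset.mul_sum,
    ← Finset.mul_sum] at key
  have e1 : ∑ j ∈ Finset.range (n + 2),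
      (((n + 1).choose j : ℤ) ^ 2 * ((2 * j).choose j : ℤ)) = tseq (n + 1) := rfl
  have e2 : ∑ j ∈ Finset.range (n + 2),
      ((n.choose j : ℤ) ^ 2 * ((2 * j).choose j : ℤ)) = tseq n := by
    rw [Finset.sum_range_succ, tseq]
    simp [Nat.choose_eq_zero_of_lt (by omega : n < n + 1)]
  have e3 : ∑ j ∈ Finset.range (n + 2),
      (((n - 1).choose j : ℤ) ^ 2 * ((2 * j).choose j : ℤ)) = tseq (n - 1) := by
    obtain ⟨m, rfl⟩ : ∃ m, n = m + 1 := ⟨n - 1, by omega⟩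
    simp only [Nat.add_sub_cancel]
    rw [show m + 1 + 2 = (m + 1) + 1 + 1 by ring, Finset.sum_range_succ, Finset.sum_range_succ,
      tseq]
    simp [Nat.choose_eq_zero_of_lt (by omega : m < m + 1),
      Nat.choose_eq_zero_of_lt (by omega : m < m + 2)]
  rw [e1, e2, e3] at key
  have hne : ((n : ℤ) + 1) ^ 2 ≠ 0 := pow_ne_zero 2 (by positivity)
  apply mul_left_cancel₀ hne
  linear_combination key
end

section
/- Let y(p) = ∑_{n≥0} t(n) pⁿ be a formal power series solution of the differential equation d/dp ( p(1−p)(1−4p)(1−2p)(1+2p) y' ) = 2(1−4p)(1+4p−8p²) y with t(0)=1 and t(1)=2. Then the coefficients satisfy (n+1)² t(n+1) = (5n²+5n+2) t(n) − 4(5n²−5n+2) t(n−2) + 16(n−1)² t(n−3) for all n, i.e., the coefficient of t(n−1) vanishes. -/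
open PowerSeries

theorem stmt7 (t : ℕ → ℚ) (ht0 : t 0 = 1) (ht1 : t 1 = 2)
    (hode : derivativeFun
        (X * (1 - X) * (1 - 4 * X) * (1 - 2 * X) * (1 + 2 * X)
          * derivativeFun (PowerSeries.mk t))
      = 2 * (1 - 4 * X) * (1 + 4 * X - 8 * X ^ 2) * PowerSeries.mk t) :
    ∀ n : ℕ, ((n : ℚ) + 1) ^ 2 * t (n + 1)
      = (5 * (n : ℚ) ^ 2 + 5 * n + 2) * t n
        - 4 * (5 * (n : ℚ) ^ 2 - 5 * n + 2) * (if 2 ≤ n then t (n - 2) else 0)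
        + 16 * ((n : ℚ) - 1) ^ 2 * (if 3 ≤ n then t (n - 3) else 0) := by
  have coeff_derivativeFun : ∀ (f : ℚ⟦X⟧) (n : ℕ),
      coeff n (derivativeFun f) = coeff (n + 1) f * (n + 1) := fun f n => coeff_derivative f n
  set D := derivativeFun (PowerSeries.mk t) with hDdef
  have hD : ∀ m : ℕ, coeff m D = t (m + 1) * (m + 1) := by
    intro m
    rw [hDdef, coeff_derivativeFun, coeff_mk]
  have e1 : X * (1 - X) * (1 - 4 * X) * (1 - 2 * X) * (1 + 2 * X) * D
      = X ^ 1 * D - C 5 * (X ^ 2 * D) + C 20 * (X ^ 4 * D)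
        - C 16 * (X ^ 5 * D) := by
    simp only [map_ofNat]
    ring
  have e2 : (2 : ℚ⟦X⟧) * (1 - 4 * X) * (1 + 4 * X - 8 * X ^ 2) * PowerSeries.mk t
      = C 2 * PowerSeries.mk t - C 48 * (X ^ 2 * PowerSeries.mk t)
        + C 64 * (X ^ 3 * PowerSeries.mk t) := by
    simp only [map_ofNat]
    ring
  rw [e1, e2] at hode
  have key : ∀ k : ℕ, coeff k (derivativeFun
      (X ^ 1 * D - C 5 * (X ^ 2 * D) + C 20 * (X ^ 4 * D) - C 16 * (X ^ 5 * D)))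
      = coeff k (C 2 * PowerSeries.mk t - C 48 * (X ^ 2 * PowerSeries.mk t)
        + C 64 * (X ^ 3 * PowerSeries.mk t)) := fun k => by rw [hode]
  intro n
  match n with
  | 0 =>
    have h := key 0
    simp only [coeff_derivativeFun, map_sub, map_add, coeff_C_mul, coeff_X_pow_mul',
      coeff_mk, hD] at h
    norm_num at h ⊢
    linarith
  | 1 =>
    have h := key 1
    simp only [coeff_derivativeFun, map_sub, map_add, coeff_C_mul, coeff_X_pow_mul',
      coeff_mk, hD] at h
    norm_num at h ⊢
    linarith
  | 2 =>
    have h := key 2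
    simp only [coeff_derivativeFun, map_sub, map_add, coeff_C_mul, coeff_X_pow_mul',
      coeff_mk, hD] at h
    norm_num at h ⊢
    linarith
  | 3 =>
    have h := key 3
    simp only [coeff_derivativeFun, map_sub, map_add, coeff_C_mul, coeff_X_pow_mul',
      coeff_mk, hD] at h
    norm_num at h ⊢
    linarith
  | (m + 4) =>
    have h := key (m + 4)
    simp only [coeff_derivativeFun, map_sub, map_add, coeff_C_mul, coeff_X_pow_mul',
      show 1 ≤ m + 4 + 1 by omega, show 2 ≤ m + 4 + 1 by omega,
      show 4 ≤ m + 4 + 1 by omega, show 5 ≤ m + 4 + 1 by omega,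
      show 2 ≤ m + 4 by omega, show 3 ≤ m + 4 by omega,
      if_true, coeff_mk, hD] at h
    simp only [show 2 ≤ m + 4 by omega, show 3 ≤ m + 4 by omega, if_true,
      show m + 4 - 2 = m + 2 by omega, show m + 4 - 3 = m + 1 by omega]
    simp only [show m + 4 + 1 - 1 = m + 4 by omega, show m + 4 + 1 - 2 = m + 3 by omega,
      show m + 4 + 1 - 4 = m + 1 by omega, show m + 4 + 1 - 5 = m by omega] at h
    push_cast at h ⊢
    linear_combination h
end

section
/- For x in a neighborhood of 0, √(1+2x) · ₂F₁(1/3, 2/3; 1; 27x²(1+x)²/(4(1+x+x²)³)) = (1+x+x²) · ₂F₁(1/2, 1/2; 1; x³(2+x)/(1+2x)). -/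
open Filter Set
set_option maxHeartbeats 4000000

/-- The Gauss hypergeometric series `₂F₁(a,b;1;z)`. -/
noncomputable def F21 (a b z : ℝ) : ℝ :=
  ∑' n : ℕ, (ascPochhammer ℝ n).eval a * (ascPochhammer ℝ n).eval b
      / ((n.factorial : ℝ)) ^ 2 * z ^ n

namespace Stmt15

/-- Sum of a power series with coefficients `c`. -/
noncomputable def g (c : ℕ → ℝ) (z : ℝ) : ℝ := ∑' n : ℕ, c n * z ^ n
/-- Derivative coefficients. -/
def sh (c : ℕ → ℝ) : ℕ → ℝ := fun n => ((n : ℝ) + 1) * c (n + 1)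
/-- Multiplication-by-`z` coefficients. -/
def mz (c : ℕ → ℝ) : ℕ → ℝ := fun n => if n = 0 then 0 else c (n - 1)
noncomputable def cH (a b : ℝ) : ℕ → ℝ := fun n =>
  (ascPochhammer ℝ n).eval a * (ascPochhammer ℝ n).eval b / ((n.factorial : ℝ)) ^ 2
noncomputable def cS : ℕ → ℝ := fun n =>
  (ascPochhammer ℝ n).eval (-(1/2)) / (n.factorial : ℝ)
noncomputable def cA : ℕ → ℝ := cH (1/3) (2/3)
noncomputable def cB : ℕ → ℝ := cH (1/2) (1/2)
noncomputable def pf (x : ℝ) : ℝ := 27 * x ^ 2 * (1 + x) ^ 2 / (4 * (1 + x + x ^ 2) ^ 3)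
noncomputable def pf1 (x : ℝ) : ℝ := (27/4) * (2*x + 5*x^2 - 5*x^4 - 2*x^5) / (1 + x + x^2)^4
noncomputable def pf2 (x : ℝ) : ℝ :=
  (27/2) * (1 + 2*x - 12*x^2 - 25*x^3 - 5*x^4 + 9*x^5 + 3*x^6) / (1 + x + x^2)^5
noncomputable def qf (x : ℝ) : ℝ := x ^ 3 * (2 + x) / (1 + 2 * x)
noncomputable def qf1 (x : ℝ) : ℝ := 6*x^2*(1+x)^2 / (1+2*x)^2
noncomputable def qf2 (x : ℝ) : ℝ := (12*x + 36*x^2 + 48*x^3 + 24*x^4) / (1+2*x)^3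
def Np (x : ℝ) : ℝ := 27 * x ^ 2 * (1 + x) ^ 2
def Dp (x : ℝ) : ℝ := 4 * (1 + x + x ^ 2) ^ 3
def Ppoly (x : ℝ) : ℝ :=
  2*x + 13*x^2 + 34*x^3 + 46*x^4 + 28*x^5 - 14*x^6 - 44*x^7 - 41*x^8 - 20*x^9 - 4*x^10
def Qpoly (x : ℝ) : ℝ := 2 + 10*x + 6*x^2 - 52*x^3 - 140*x^4 - 168*x^5 - 112*x^6 - 32*x^7
def Rpoly (x : ℝ) : ℝ := -2 - 16*x - 43*x^2 - 14*x^3 + 92*x^4 + 116*x^5 + 34*x^6 - 4*x^7 - x^8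
def Phat (x : ℝ) : ℝ :=
  2 + 13*x + 34*x^2 + 46*x^3 + 28*x^4 - 14*x^5 - 44*x^6 - 41*x^7 - 20*x^8 - 4*x^9
noncomputable def Lf (x : ℝ) : ℝ := g cS (-2*x) * g cA (pf x)
noncomputable def Lf1 (x : ℝ) : ℝ :=
  g (sh cS) (-2*x) * -2 * g cA (pf x) + g cS (-2*x) * (g (sh cA) (pf x) * pf1 x)
noncomputable def Lf2 (x : ℝ) : ℝ :=
  (g (sh (sh cS)) (-2*x) * -2 * -2) * g cA (pf x)
    + g (sh cS) (-2*x) * -2 * (g (sh cA) (pf x) * pf1 x)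
  + (g (sh cS) (-2*x) * -2 * (g (sh cA) (pf x) * pf1 x)
    + g cS (-2*x) * (g (sh (sh cA)) (pf x) * pf1 x * pf1 x + g (sh cA) (pf x) * pf2 x))
noncomputable def Rf (x : ℝ) : ℝ := (1 + x + x^2) * g cB (qf x)
noncomputable def Rf1 (x : ℝ) : ℝ :=
  (1 + 2*x) * g cB (qf x) + (1 + x + x^2) * (g (sh cB) (qf x) * qf1 x)
noncomputable def Rf2 (x : ℝ) : ℝ :=
  2 * g cB (qf x) + (1 + 2*x) * (g (sh cB) (qf x) * qf1 x)
  + ((1 + 2*x) * (g (sh cB) (qf x) * qf1 x)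
    + (1 + x + x^2) * (g (sh (sh cB)) (qf x) * qf1 x * qf1 x + g (sh cB) (qf x) * qf2 x))
noncomputable def wf (x : ℝ) : ℝ := Lf x - Rf x
noncomputable def wf1 (x : ℝ) : ℝ := Lf1 x - Rf1 x
noncomputable def wf2 (x : ℝ) : ℝ := Lf2 x - Rf2 x


lemma add_one_le_two_pow (n : ℕ) : (n : ℝ) + 1 ≤ 2 ^ n := by
  have h : (n + 1 : ℕ) ≤ 2 ^ n := Nat.lt_two_pow_self
  exact_mod_cast h

variable {c d e : ℕ → ℝ} {N B z α : ℝ}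

lemma mz_bound (hN : 0 ≤ N) (hB : 1 ≤ B) (hc : ∀ n, |c n| ≤ N * B ^ n) :
    ∀ n, |mz c n| ≤ N * B ^ n := by
  intro n
  have hB0 : (0:ℝ) < B := lt_of_lt_of_le one_pos hB
  match n with
  | 0 => simpa [mz] using mul_nonneg hN (by positivity : (0:ℝ) ≤ B ^ (0:ℕ))
  | (m+1) =>
    simp only [mz, Nat.add_sub_cancel, if_neg (Nat.succ_ne_zero m)]
    refine (hc m).trans (mul_le_mul_of_nonneg_left ?_ hN)
    exact pow_le_pow_right₀ (by linarith) (Nat.le_succ m)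

lemma sh_bound (hN : 0 ≤ N) (hB : 1 ≤ B) (hc : ∀ n, |c n| ≤ N * B ^ n) :
    ∀ n, |sh c n| ≤ (N * B) * (2 * B) ^ n := by
  intro n
  have hB0 : (0:ℝ) < B := lt_of_lt_of_le one_pos hB
  have h1 : |sh c n| = ((n:ℝ)+1) * |c (n+1)| := by
    rw [sh, abs_mul, abs_of_nonneg (by positivity)]
  rw [h1]
  have h2 : ((n:ℝ)+1) * |c (n+1)| ≤ ((n:ℝ)+1) * (N * B ^ (n+1)) :=
    mul_le_mul_of_nonneg_left (hc (n+1)) (by positivity)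
  refine h2.trans ?_
  have h3 : ((n:ℝ)+1) ≤ 2 ^ n := add_one_le_two_pow n
  calc ((n:ℝ)+1) * (N * B ^ (n+1)) ≤ 2 ^ n * (N * B ^ (n+1)) :=
        mul_le_mul_of_nonneg_right h3 (by positivity)
    _ = (N * B) * (2 * B) ^ n := by rw [mul_pow]; ring

lemma summable_g (hN : 0 ≤ N) (hB : 1 ≤ B) (hc : ∀ n, |c n| ≤ N * B ^ n)
    (hz : |z| ≤ 1 / (2 * B)) : Summable (fun n => c n * z ^ n) := by
  have hB0 : (0:ℝ) < B := lt_of_lt_of_le one_pos hB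
  refine Summable.of_norm_bounded (g := fun n => N * (1/2 : ℝ) ^ n)
    ((summable_geometric_of_lt_one (by norm_num) (by norm_num)).mul_left N) ?_
  intro n
  have h0 : ‖c n * z ^ n‖ = |c n| * |z| ^ n := by
    rw [norm_mul, norm_pow]; rfl
  rw [h0]
  have h1 : |z| ^ n ≤ (1 / (2*B)) ^ n := pow_le_pow_left₀ (abs_nonneg z) hz n
  calc |c n| * |z| ^ n ≤ (N * B ^ n) * (1/(2*B)) ^ n :=
        mul_le_mul (hc n) h1 (by positivity) (by positivity)
    _ = N * (1/2:ℝ) ^ n * (B ^ n * (B ^ n)⁻¹) := by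
        rw [div_pow, mul_pow]
        simp only [one_div, inv_pow]
        field_simp
        ring
    _ = N * (1/2:ℝ) ^ n := by
        rw [mul_inv_cancel₀ (by positivity), mul_one]

lemma hasDerivAt_g (hN : 0 ≤ N) (hB : 1 ≤ B) (hc : ∀ n, |c n| ≤ N * B ^ n)
    (hz : |z| < 1 / (4 * B)) : HasDerivAt (g c) (g (sh c) z) z := by
  have hB0 : (0:ℝ) < B := lt_of_lt_of_le one_pos hB
  set r : ℝ := 1 / (4 * B) with hr
  have hr0 : 0 < r := by positivity
  have hmem : z ∈ Metric.ball (0:ℝ) r := by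
    simpa [Real.dist_eq] using hz
  have hbound : ∀ n : ℕ, ∀ y ∈ Metric.ball (0:ℝ) r,
      ‖c n * ((n:ℝ) * y ^ (n-1))‖ ≤ (4*N*B) * ((n:ℝ) * (1/4:ℝ)^n) := by
    intro n y hy
    have hy' : |y| ≤ r := le_of_lt (by simpa [Real.dist_eq] using hy)
    have h0 : ‖c n * ((n:ℝ) * y ^ (n-1))‖ = |c n| * ((n:ℝ) * |y| ^ (n-1)) := by
      rw [norm_mul, norm_mul, norm_pow]
      simp [abs_of_nonneg (n.cast_nonneg : (0:ℝ) ≤ (n:ℝ))]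
    rw [h0]
    match n with
    | 0 => simp
    | (m+1) =>
      simp only [Nat.add_sub_cancel]
      have h1 : |y| ^ m ≤ r ^ m := pow_le_pow_left₀ (abs_nonneg y) hy' m
      have h2 : |c (m+1)| ≤ N * B ^ (m+1) := hc (m+1)
      have key : (N * B ^ (m+1)) * (((m:ℝ)+1) * r ^ m) =
          (4*N*B) * ((((m:ℝ)+1)) * (1/4:ℝ)^(m+1)) := by
        rw [hr]
        rw [div_pow, one_pow]
        simp only [one_div, inv_pow]
        field_simp
        ring
      push_cast
      calc |c (m+1)| * (((m:ℝ)+1) * |y| ^ m)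
          ≤ (N * B ^ (m+1)) * (((m:ℝ)+1) * r ^ m) := by
            apply mul_le_mul h2 (mul_le_mul_of_nonneg_left h1 (by positivity))
              (by positivity) (by positivity)
        _ = (4*N*B) * (((m:ℝ)+1) * (1/4:ℝ)^(m+1)) := key
  have husum : Summable (fun n : ℕ => (4*N*B) * ((n:ℝ) * (1/4:ℝ)^n)) := by
    have := summable_pow_mul_geometric_of_norm_lt_one (R := ℝ) 1 (r := (1/4:ℝ))
      (by rw [Real.norm_eq_abs]; rw [abs_of_nonneg]; norm_num; norm_num)
    simpa [pow_one] using this.mul_left (4*N*B)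
  have hder := hasDerivAt_tsum_of_isPreconnected husum Metric.isOpen_ball
    (convex_ball (0:ℝ) r).isPreconnected
    (g := fun n z => c n * z ^ n) (g' := fun n y => c n * ((n:ℝ) * y ^ (n-1)))
    (fun n y _ => (hasDerivAt_pow n y).const_mul (c n))
    (fun n y hy => hbound n y hy)
    (Metric.mem_ball_self hr0)
    (by simpa using summable_g hN hB hc (z := 0) (by simp; positivity))
    hmem
  have hsum2 : Summable (fun n : ℕ => c n * ((n:ℝ) * z ^ (n-1))) :=
    Summable.of_norm_bounded husum (fun n => hbound n z hmem)
  have : (∑' n : ℕ, c n * ((n:ℝ) * z ^ (n-1))) = g (sh c) z := by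
    rw [Summable.tsum_eq_zero_add hsum2]
    simp only [Nat.cast_zero, zero_mul, mul_zero, zero_add, Nat.add_sub_cancel]
    refine tsum_congr fun n => ?_
    simp [sh]
    push_cast
    ring
  rw [this] at hder
  exact hder


lemma g_zero : g c 0 = c 0 := by
  rw [g, tsum_eq_single 0 (fun n hn => by simp [zero_pow hn])]
  simp

lemma g_add (hd : Summable (fun n => d n * z ^ n)) (he : Summable (fun n => e n * z ^ n)) :
    g (fun n => d n + e n) z = g d z + g e z := by
  rw [g, g, g, ← Summable.tsum_add hd he]
  exact tsum_congr fun n => by ring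

lemma g_const_mul : g (fun n => α * d n) z = α * g d z := by
  rw [g, g, ← tsum_mul_left]
  exact tsum_congr fun n => by ring

lemma summable_mz (hd : Summable (fun n => d n * z ^ n)) :
    Summable (fun n => mz d n * z ^ n) := by
  rw [← summable_nat_add_iff 1]
  simp only [mz, Nat.add_sub_cancel, if_neg (Nat.succ_ne_zero _)]
  have : (fun n : ℕ => d n * z ^ (n + 1)) = fun n => z * (d n * z ^ n) := by
    funext n; ring
  exact this ▸ hd.mul_left z

lemma g_mz (hd : Summable (fun n => d n * z ^ n)) : g (mz d) z = z * g d z := by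
  rw [g, g, ← tsum_mul_left, Summable.tsum_eq_zero_add (summable_mz hd)]
  norm_num [mz]
  exact tsum_congr fun n => by ring

lemma g_head_bound (hN : 0 ≤ N) (hB : 1 ≤ B) (hc : ∀ n, |c n| ≤ N * B ^ n)
    (hz : |z| ≤ 1 / (2 * B)) : |g c z - c 0| ≤ 2 * N * B * |z| := by
  have hB0 : (0:ℝ) < B := lt_of_lt_of_le one_pos hB
  have hsum : Summable (fun n => c n * z ^ n) := summable_g hN hB hc hz
  have h0 : g c z - c 0 = ∑' n : ℕ, c (n+1) * z ^ (n+1) := by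
    rw [g, Summable.tsum_eq_zero_add hsum]; simp
  rw [h0]
  have hsum1 : Summable (fun n : ℕ => c (n+1) * z ^ (n+1)) :=
    (summable_nat_add_iff 1).mpr hsum
  refine (norm_tsum_le_tsum_norm hsum1.norm).trans ?_
  have hbound : ∀ n : ℕ, ‖c (n+1) * z ^ (n+1)‖ ≤ (N * B * |z|) * (1/2:ℝ) ^ n := by
    intro n
    have h0 : ‖c (n+1) * z ^ (n+1)‖ = |c (n+1)| * (|z| ^ n * |z|) := by
      rw [norm_mul, norm_pow, pow_succ]; rfl
    rw [h0]
    have h1 : |z| ^ n ≤ (1/(2*B)) ^ n := pow_le_pow_left₀ (abs_nonneg z) hz n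
    have h2 : |c (n+1)| ≤ N * B ^ (n+1) := hc (n+1)
    have key : (N * B ^ (n+1)) * ((1/(2*B)) ^ n * |z|) = (N * B * |z|) * (1/2:ℝ)^n * (B^n * (B^n)⁻¹) := by
      rw [div_pow, one_pow, pow_succ]
      simp only [one_div, inv_pow]
      field_simp
      ring
    calc |c (n+1)| * (|z| ^ n * |z|) ≤ (N * B ^ (n+1)) * ((1/(2*B)) ^ n * |z|) := by
          apply mul_le_mul h2 (mul_le_mul_of_nonneg_right h1 (abs_nonneg z))
            (by positivity) (by positivity)
      _ = (N * B * |z|) * (1/2:ℝ)^n := by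
          rw [key, mul_inv_cancel₀ (by positivity), mul_one]
  refine (Summable.tsum_le_tsum hbound hsum1.norm
    ((summable_geometric_of_lt_one (by norm_num) (by norm_num)).mul_left _)).trans ?_
  rw [tsum_mul_left, tsum_geometric_of_lt_one (by norm_num) (by norm_num)]
  have : ((1:ℝ) - 1/2)⁻¹ = 2 := by norm_num
  rw [this]
  ring_nf
  nlinarith [abs_nonneg z, mul_nonneg (mul_nonneg hN hB0.le) (abs_nonneg z)]

lemma analyticAt_g (hN : 0 ≤ N) (hB : 1 ≤ B) (hc : ∀ n, |c n| ≤ N * B ^ n) :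
    AnalyticAt ℝ (g c) 0 := by
  have hB0 : (0:ℝ) < B := lt_of_lt_of_le one_pos hB
  set p := FormalMultilinearSeries.ofScalars ℝ c with hp
  set r : NNReal := ⟨1/(2*B), by positivity⟩ with hrdef
  have hrad : (r : ENNReal) ≤ p.radius := by
    apply p.le_radius_of_bound N
    intro n
    have hnorm : ‖p n‖ = |c n| := by
      rw [hp]
      simpa using FormalMultilinearSeries.ofScalars_norm ℝ c n
    rw [hnorm]
    have hcoe : (r : ℝ) ^ n = (1/(2*B)) ^ n := rfl
    calc |c n| * (r : ℝ) ^ n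
        = |c n| * (1/(2*B)) ^ n := by rw [hcoe]
      _ ≤ (N * B ^ n) * (1/(2*B)) ^ n := by
          apply mul_le_mul_of_nonneg_right (hc n) (by positivity)
      _ = N * (1/2:ℝ)^n * (B^n * (B^n)⁻¹) := by rw [div_pow, mul_pow]; simp only [one_div, inv_pow]; field_simp; ring
      _ = N * (1/2:ℝ)^n := by rw [mul_inv_cancel₀ (by positivity), mul_one]
      _ ≤ N := by
          nlinarith [pow_le_one₀ (by norm_num : (0:ℝ) ≤ 1/2) (by norm_num : (1/2:ℝ) ≤ 1) (n := n)]
  have hpos : 0 < p.radius := by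
    refine lt_of_lt_of_le ?_ hrad
    rw [ENNReal.coe_pos]
    exact (by positivity : (0:ℝ) < 1/(2*B))
  have hball := p.hasFPowerSeriesOnBall hpos
  have hgeq : g c = p.sum := by
    funext y
    rw [g, FormalMultilinearSeries.sum]
    refine tsum_congr fun n => ?_
    rw [hp, FormalMultilinearSeries.ofScalars_apply_eq, smul_eq_mul]
  rw [hgeq]
  exact hball.analyticAt


lemma poch_succ (a : ℝ) (n : ℕ) :
    (ascPochhammer ℝ (n+1)).eval a = (ascPochhammer ℝ n).eval a * (a + n) := by
  rw [ascPochhammer_succ_right]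
  simp [Polynomial.eval_mul]

lemma fact_succ (n : ℕ) : ((n+1).factorial : ℝ) = ((n:ℝ)+1) * (n.factorial : ℝ) := by
  rw [Nat.factorial_succ]; push_cast; ring

lemma fact_ne (n : ℕ) : ((n.factorial : ℝ)) ≠ 0 := by
  exact_mod_cast n.factorial_ne_zero

lemma cH_zero (a b : ℝ) : cH a b 0 = 1 := by simp [cH]

lemma cH_rec (a b : ℝ) (n : ℕ) :
    cH a b (n+1) * ((n:ℝ)+1)^2 = cH a b n * (((n:ℝ)+a) * ((n:ℝ)+b)) := by
  rw [cH, cH, poch_succ, poch_succ, fact_succ]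
  have h := fact_ne n
  field_simp
  ring

lemma cS_zero : cS 0 = 1 := by simp [cS]

lemma cS_rec (n : ℕ) : cS (n+1) * ((n:ℝ)+1) = cS n * ((n:ℝ) - 1/2) := by
  rw [cS, cS, poch_succ, fact_succ]
  have h := fact_ne n
  field_simp
  ring

lemma cH_pos_le {a b : ℝ} (ha : 0 < a) (ha1 : a ≤ 1) (hb : 0 < b) (hb1 : b ≤ 1) :
    ∀ n, 0 < cH a b n ∧ cH a b n ≤ 1 := by
  intro n
  induction n with
  | zero => rw [cH_zero]; norm_num
  | succ m ih =>
    obtain ⟨hp, hle⟩ := ih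
    have hrec := cH_rec a b m
    have hm1 : (0:ℝ) < ((m:ℝ)+1)^2 := by positivity
    have hfac : 0 < ((m:ℝ)+a) * ((m:ℝ)+b) := by positivity
    constructor
    · nlinarith
    · nlinarith [mul_le_mul hle (le_refl (((m:ℝ)+a) * ((m:ℝ)+b))) hfac.le zero_le_one,
        sq_nonneg ((m:ℝ)+1)]

lemma cH_bound {a b : ℝ} (ha : 0 < a) (ha1 : a ≤ 1) (hb : 0 < b) (hb1 : b ≤ 1) :
    ∀ n, |cH a b n| ≤ 1 * 1 ^ n := by
  intro n
  obtain ⟨hp, hle⟩ := cH_pos_le ha ha1 hb hb1 n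
  rw [abs_of_pos hp]; simpa using hle

lemma cS_bound : ∀ n, |cS n| ≤ 1 * 1 ^ n := by
  intro n
  simp only [one_pow, mul_one]
  induction n with
  | zero => rw [cS_zero]; norm_num
  | succ m ih =>
    have hrec := cS_rec m
    have h1 : |cS (m+1)| * ((m:ℝ)+1) = |cS m| * |(m:ℝ) - 1/2| := by
      rw [← abs_of_pos (by positivity : (0:ℝ) < (m:ℝ)+1), ← abs_mul, hrec, abs_mul]
    have h2 : |(m:ℝ) - 1/2| ≤ (m:ℝ) + 1 := by
      rw [abs_le]; constructor <;> [linarith [Nat.cast_nonneg (α := ℝ) m]; linarith]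
    have h3 : |cS (m+1)| * ((m:ℝ)+1) ≤ 1 * ((m:ℝ)+1) := by
      rw [h1]
      exact mul_le_mul ih h2 (abs_nonneg _) zero_le_one
    exact le_of_mul_le_mul_right (by simpa using h3) (by positivity)

lemma mz_succ (d : ℕ → ℝ) (n : ℕ) : mz d (n+1) = d n := by simp [mz]

lemma mz_zero' (d : ℕ → ℝ) : mz d 0 = 0 := by simp [mz]

/-- termwise identity for the hypergeometric ODE, case `a+b=1`. -/
lemma hyp_key {a b : ℝ} (hab : a + b = 1) (n : ℕ) :
    mz (sh (sh (cH a b))) n + sh (cH a b) n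
      = mz (mz (sh (sh (cH a b)))) n + (2 * mz (sh (cH a b)) n + a * b * cH a b n) := by
  have hb' : b = 1 - a := by linarith
  subst hb'
  match n with
  | 0 =>
    simp only [mz_zero', sh, mz_succ]
    have h0 := cH_rec a (1-a) 0
    push_cast
    push_cast at h0
    linear_combination h0
  | 1 =>
    simp only [mz_succ, mz_zero', sh]
    have h0 := cH_rec a (1-a) 0
    have h1 := cH_rec a (1-a) 1
    push_cast
    push_cast at h0 h1
    linear_combination h1
  | (m+2) =>
    simp only [mz_succ, sh]
    have h2 := cH_rec a (1-a) (m+2)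
    push_cast
    push_cast at h2
    linear_combination h2

/-- termwise identity for the binomial ODE `2(1-z)S' = -S`. -/
lemma sqrtA_key (n : ℕ) : 2 * sh cS n + cS n = 2 * mz (sh cS) n := by
  match n with
  | 0 =>
    simp only [mz_zero', sh]
    have h0 := cS_rec 0
    push_cast
    push_cast at h0
    linear_combination 2*h0
  | (m+1) =>
    simp only [mz_succ, sh]
    have h1 := cS_rec (m+1)
    push_cast
    push_cast at h1
    linear_combination 2*h1

/-- termwise identity for `2(1-z)S'' = S'`. -/
lemma sqrtB_key (n : ℕ) : 2 * sh (sh cS) n = 2 * mz (sh (sh cS)) n + sh cS n := by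
  match n with
  | 0 =>
    simp only [mz_zero', sh]
    have h1 := cS_rec 1
    push_cast
    push_cast at h1
    linear_combination 2*h1
  | (m+1) =>
    simp only [mz_succ, sh]
    have h2 := cS_rec (m+2)
    push_cast
    push_cast at h2
    linear_combination (2*(m:ℝ)+4)*h2

lemma summable_const_mul (α : ℝ) (hd : Summable (fun n => d n * z ^ n)) :
    Summable (fun n => (α * d n) * z ^ n) := by
  simpa [mul_assoc] using hd.mul_left α

lemma bound_sh1 (hc : ∀ n, |c n| ≤ 1 * 1 ^ n) : ∀ n, |sh c n| ≤ 1 * 2 ^ n := by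
  have := sh_bound (by norm_num) le_rfl hc
  simpa using this

lemma bound_sh2 (hc : ∀ n, |c n| ≤ 1 * 1 ^ n) : ∀ n, |sh (sh c) n| ≤ 2 * 4 ^ n := by
  have h1 := bound_sh1 hc
  have := sh_bound (by norm_num) (by norm_num : (1:ℝ) ≤ 2) h1
  intro n
  have h2 := this n
  calc |sh (sh c) n| ≤ (1*2) * (2*2) ^ n := h2
    _ = 2 * 4 ^ n := by norm_num

section odes
variable (hc : ∀ n, |c n| ≤ 1 * 1 ^ n) (hz : |z| < 1/8)
include hc hz

lemma sum0 : Summable (fun n => c n * z ^ n) :=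
  summable_g (by norm_num) le_rfl hc (le_trans hz.le (by norm_num))

lemma sum1 : Summable (fun n => sh c n * z ^ n) :=
  summable_g (by norm_num) (by norm_num : (1:ℝ) ≤ 2) (bound_sh1 hc)
    (le_trans hz.le (by norm_num))

lemma sum2 : Summable (fun n => sh (sh c) n * z ^ n) :=
  summable_g (by norm_num : (0:ℝ) ≤ 2) (by norm_num : (1:ℝ) ≤ 4) (bound_sh2 hc)
    (le_trans hz.le (by norm_num))

end odes

lemma g_hyp_ode {a b : ℝ} (ha : 0 < a) (ha1 : a ≤ 1) (hb : 0 < b) (hb1 : b ≤ 1)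
    (hab : a + b = 1) {z : ℝ} (hz : |z| < 1/8) :
    z * (1 - z) * g (sh (sh (cH a b))) z + (1 - 2*z) * g (sh (cH a b)) z
      - a * b * g (cH a b) z = 0 := by
  have hcb := cH_bound ha ha1 hb hb1
  have s0 := sum0 hcb hz
  have s1 := sum1 hcb hz
  have s2 := sum2 hcb hz
  have h1 : g (mz (sh (sh (cH a b)))) z = z * g (sh (sh (cH a b))) z := g_mz s2
  have h2 : g (mz (mz (sh (sh (cH a b))))) z = z * g (mz (sh (sh (cH a b)))) z :=
    g_mz (summable_mz s2)
  have h3 : g (mz (sh (cH a b))) z = z * g (sh (cH a b)) z := g_mz s1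
  have key : (fun n => mz (sh (sh (cH a b))) n + sh (cH a b) n)
      = (fun n => mz (mz (sh (sh (cH a b)))) n + (2 * mz (sh (cH a b)) n + a * b * cH a b n)) :=
    funext (hyp_key hab)
  have h4 : g (mz (sh (sh (cH a b)))) z + g (sh (cH a b)) z
      = g (mz (mz (sh (sh (cH a b))))) z + (2 * g (mz (sh (cH a b))) z + a * b * g (cH a b) z) := by
    have e1 := g_add (z := z) (summable_mz s2) s1
    have hB : Summable (fun n => (2 * mz (sh (cH a b)) n + a * b * cH a b n) * z ^ n) := by
      refine ((summable_const_mul 2 (summable_mz s1)).add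
        (summable_const_mul (a*b) s0)).congr fun n => by ring
    have e2 : g (fun n => 2 * mz (sh (cH a b)) n + a * b * cH a b n) z
        = 2 * g (mz (sh (cH a b))) z + a * b * g (cH a b) z := by
      rw [g_add (summable_const_mul 2 (summable_mz s1)) (summable_const_mul (a*b) s0),
        g_const_mul, g_const_mul]
    have e3 := g_add (z := z) (summable_mz (summable_mz s2)) hB
    rw [← e1, key, e3, e2]
  linear_combination (z-1)*h1 + h2 + 2*h3 + h4

lemma g_sqrtA {z : ℝ} (hz : |z| < 1/8) :
    2*(1-z)*g (sh cS) z + g cS z = 0 := by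
  have s0 := sum0 cS_bound hz
  have s1 := sum1 cS_bound hz
  have h3 : g (mz (sh cS)) z = z * g (sh cS) z := g_mz s1
  have key : (fun n => 2 * sh cS n + cS n) = (fun n => 2 * mz (sh cS) n) :=
    funext sqrtA_key
  have h4 : 2 * g (sh cS) z + g cS z = 2 * g (mz (sh cS)) z := by
    have e2 : g (fun n => 2 * sh cS n + cS n) z = 2 * g (sh cS) z + g cS z := by
      rw [g_add (summable_const_mul 2 s1) s0, g_const_mul]
    rw [← e2, key, g_const_mul]
  linear_combination 2*h3 + h4

lemma g_sqrtB {z : ℝ} (hz : |z| < 1/8) :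
    2*(1-z)*g (sh (sh cS)) z - g (sh cS) z = 0 := by
  have s1 := sum1 cS_bound hz
  have s2 := sum2 cS_bound hz
  have h3 : g (mz (sh (sh cS))) z = z * g (sh (sh cS)) z := g_mz s2
  have key : (fun n => 2 * sh (sh cS) n) = (fun n => 2 * mz (sh (sh cS)) n + sh cS n) :=
    funext sqrtB_key
  have h4 : 2 * g (sh (sh cS)) z = 2 * g (mz (sh (sh cS))) z + g (sh cS) z := by
    have e2 : g (fun n => 2 * sh (sh cS) n) z = 2 * g (sh (sh cS)) z := g_const_mul
    rw [← e2, key, g_add (summable_const_mul 2 (summable_mz s2)) s1, g_const_mul]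
  linear_combination 2*h3 + h4

lemma g_cS_sq {z : ℝ} (hz : |z| < 1/8) : (g cS z)^2 = 1 - z := by
  set f : ℝ → ℝ := fun t => (g cS t)^2 / (1 - t) with hf
  have hder : ∀ y ∈ Metric.ball (0:ℝ) (1/8), HasDerivAt f 0 y := by
    intro y hy
    have hy8 : |y| < 1/8 := by simpa [Real.dist_eq] using hy
    have hS : HasDerivAt (g cS) (g (sh cS) y) y := by
      refine hasDerivAt_g (by norm_num) le_rfl cS_bound ?_
      rw [abs_lt] at *; constructor <;> [linarith [hy8.1]; linarith [hy8.2]]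
    have hden : HasDerivAt (fun t : ℝ => 1 - t) (-1) y := by
      simpa using (hasDerivAt_id y).const_sub 1
    have hne : (1 : ℝ) - y ≠ 0 := by rw [abs_lt] at hy8; linarith [hy8.2]
    have h := (hS.fun_pow 2).fun_div hden hne
    refine h.congr_deriv (Eq.symm ?_)
    rw [eq_comm, div_eq_zero_iff]
    left
    have hA := g_sqrtA hy8
    push_cast
    linear_combination (g cS y) * hA
  have hconst : f z = f 0 := by
    have hconv : Convex ℝ (Metric.ball (0:ℝ) (1/8)) := convex_ball 0 (1/8)
    have hdiff : DifferentiableOn ℝ f (Metric.ball (0:ℝ) (1/8)) :=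
      fun y hy => ((hder y hy).differentiableAt).differentiableWithinAt
    refine hconv.is_const_of_fderivWithin_eq_zero hdiff ?_ ?_ ?_
    · intro y hy
      have h1 : fderivWithin ℝ f (Metric.ball (0:ℝ) (1/8)) y = fderiv ℝ f y :=
        fderivWithin_of_isOpen Metric.isOpen_ball hy
      rw [h1, ((hder y hy).hasFDerivAt).fderiv]
      ext w
      simp
    · simpa [Real.dist_eq] using hz
    · simpa [Real.dist_eq] using (by norm_num : |(0:ℝ)| < 1/8)
  have hne : (1 : ℝ) - z ≠ 0 := by rw [abs_lt] at hz; linarith [hz.2]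
  have h0 : f 0 = 1 := by
    rw [hf]
    simp [g_zero, cS_zero]
  rw [h0] at hconst
  rw [hf] at hconst
  field_simp at hconst
  linarith [hconst]

lemma g_cS_eq_sqrt {z : ℝ} (hz : |z| < 1/8) : g cS z = Real.sqrt (1 - z) := by
  have hsq := g_cS_sq hz
  have hpos : 0 < g cS z := by
    have habs : |z| ≤ 1/8 := hz.le
    have hb := g_head_bound (z := z) (by norm_num) le_rfl cS_bound
      (le_trans habs (by norm_num))
    rw [cS_zero, abs_le] at hb
    linarith [hb.1, habs]
  rw [← hsq, Real.sqrt_sq hpos.le]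


lemma den_pos (x : ℝ) : 0 < 1 + x + x^2 := by nlinarith [sq_nonneg (x + 1/2), sq_nonneg x]
lemma den_ne (x : ℝ) : (1 + x + x^2 : ℝ) ≠ 0 := ne_of_gt (den_pos x)
lemma den_ne' (x : ℝ) : (1 + x + x^2 : ℝ) ≠ 0 := den_ne x

lemma hasDerivAt_pf (x : ℝ) : HasDerivAt pf (pf1 x) x := by
  have hNum : HasDerivAt (fun y : ℝ => 27 * y ^ 2 * (1 + y) ^ 2)
      (27 * (2 * x ^ 1) * (1 + x) ^ 2 + 27 * x ^ 2 * (2 * (1 + x) ^ 1 * 1)) x := by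
    have h1 : HasDerivAt (fun y : ℝ => 27 * y ^ 2) (27 * ((2:ℕ) * x ^ 1)) x :=
      (hasDerivAt_pow 2 x).const_mul 27
    have h2 : HasDerivAt (fun y : ℝ => (1 + y) ^ 2) ((2:ℕ) * (1 + x) ^ 1 * 1) x :=
      (((hasDerivAt_id x).const_add 1).pow 2)
    have := h1.fun_mul h2
    simpa using this
  have hDin : HasDerivAt (fun y : ℝ => 1 + y + y ^ 2) (1 + 2 * x ^ 1) x := by
    have := ((hasDerivAt_id x).const_add 1).fun_add (hasDerivAt_pow 2 x)
    simpa using this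
  have hDen : HasDerivAt (fun y : ℝ => 4 * (1 + y + y ^ 2) ^ 3)
      (4 * (3 * (1 + x + x ^ 2) ^ 2 * (1 + 2 * x ^ 1))) x := by
    have := (hDin.pow 3).const_mul 4
    simpa using this
  have hne : (4 * (1 + x + x ^ 2) ^ 3 : ℝ) ≠ 0 := by
    have := den_pos x; positivity
  have h := hNum.fun_div hDen hne
  refine h.congr_deriv (Eq.symm ?_)
  rw [pf1, div_eq_div_iff (by have := den_pos x; positivity) (by have := den_pos x; positivity)]
  ring

lemma hasDerivAt_pf1 (x : ℝ) : HasDerivAt pf1 (pf2 x) x := by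
  have hNum : HasDerivAt (fun y : ℝ => (27/4) * (2*y + 5*y^2 - 5*y^4 - 2*y^5))
      ((27/4) * (2 + 5*(2*x^1) - 5*(4*x^3) - 2*(5*x^4))) x := by
    have h1 : HasDerivAt (fun y : ℝ => 2*y + 5*y^2 - 5*y^4 - 2*y^5)
        (2 + 5*(2*x^1) - 5*(4*x^3) - 2*(5*x^4)) x := by
      have ha := (hasDerivAt_id x).const_mul (2:ℝ)
      have hb := (hasDerivAt_pow 2 x).const_mul (5:ℝ)
      have hc := (hasDerivAt_pow 4 x).const_mul (5:ℝ)
      have hd := (hasDerivAt_pow 5 x).const_mul (2:ℝ)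
      have := ((ha.fun_add hb).fun_sub hc).fun_sub hd
      simpa using this
    exact h1.const_mul (27/4 : ℝ)
  have hDin : HasDerivAt (fun y : ℝ => 1 + y + y ^ 2) (1 + 2 * x ^ 1) x := by
    have := ((hasDerivAt_id x).const_add 1).fun_add (hasDerivAt_pow 2 x)
    simpa using this
  have hDen : HasDerivAt (fun y : ℝ => (1 + y + y ^ 2) ^ 4)
      (4 * (1 + x + x ^ 2) ^ 3 * (1 + 2 * x ^ 1)) x := by
    have := hDin.fun_pow 4
    simpa using this
  have hne : ((1 + x + x ^ 2) ^ 4 : ℝ) ≠ 0 := by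
    have := den_pos x; positivity
  have h := hNum.fun_div hDen hne
  have key : pf1 = fun y : ℝ => (27/4) * (2*y + 5*y^2 - 5*y^4 - 2*y^5) / (1 + y + y^2)^4 := rfl
  rw [key]
  refine h.congr_deriv (Eq.symm ?_)
  rw [pf2, div_eq_div_iff (by have := den_pos x; positivity) (by have := den_pos x; positivity)]
  ring

lemma hasDerivAt_qf {x : ℝ} (h2x : (1 + 2*x : ℝ) ≠ 0) : HasDerivAt qf (qf1 x) x := by
  have hNum : HasDerivAt (fun y : ℝ => y ^ 3 * (2 + y))
      (3 * x ^ 2 * (2 + x) + x ^ 3 * 1) x := by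
    have := (hasDerivAt_pow 3 x).fun_mul ((hasDerivAt_id x).const_add 2)
    simpa using this
  have hDen : HasDerivAt (fun y : ℝ => 1 + 2 * y) (2 : ℝ) x := by
    have := ((hasDerivAt_id x).const_mul 2).const_add 1
    simpa using this
  have h := hNum.fun_div hDen h2x
  refine h.congr_deriv (Eq.symm ?_)
  rw [qf1, div_eq_div_iff (by positivity) (by positivity)]
  ring

lemma hasDerivAt_qf1 {x : ℝ} (h2x : (1 + 2*x : ℝ) ≠ 0) : HasDerivAt qf1 (qf2 x) x := by
  have hNum : HasDerivAt (fun y : ℝ => 6*y^2*(1+y)^2)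
      (6 * (2 * x ^ 1) * (1 + x) ^ 2 + 6 * x ^ 2 * (2 * (1 + x) ^ 1 * 1)) x := by
    have h1 : HasDerivAt (fun y : ℝ => 6 * y ^ 2) (6 * ((2:ℕ) * x ^ 1)) x :=
      (hasDerivAt_pow 2 x).const_mul 6
    have h2 : HasDerivAt (fun y : ℝ => (1 + y) ^ 2) ((2:ℕ) * (1 + x) ^ 1 * 1) x :=
      (((hasDerivAt_id x).const_add 1).pow 2)
    have := h1.fun_mul h2
    simpa using this
  have hDin : HasDerivAt (fun y : ℝ => 1 + 2 * y) (2 : ℝ) x := by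
    have := ((hasDerivAt_id x).const_mul 2).const_add 1
    simpa using this
  have hDen : HasDerivAt (fun y : ℝ => (1 + 2*y) ^ 2) (2 * (1 + 2*x) ^ 1 * 2) x := by
    have := hDin.fun_pow 2
    simpa using this
  have h := hNum.fun_div hDen (by positivity)
  refine h.congr_deriv (Eq.symm ?_)
  rw [qf2, div_eq_div_iff (by positivity) (by positivity)]
  ring

lemma pf_nonneg (x : ℝ) : 0 ≤ pf x := by
  rw [pf]
  have := den_pos x
  positivity

lemma pf_lt {x : ℝ} (hx : |x| ≤ 1/100) : pf x < 1/8 := by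
  rw [abs_le] at hx
  rw [pf, div_lt_iff₀ (by have := den_pos x; positivity)]
  have hx2 : x^2 ≤ 1/10000 := by nlinarith [hx.1, hx.2]
  have h1x : (1+x)^2 ≤ 10201/10000 := by nlinarith [hx.1, hx.2, hx2]
  have hL : 27*x^2*(1+x)^2 ≤ 27*(1/10000)*(10201/10000) := by
    nlinarith [sq_nonneg x, sq_nonneg (1+x), hx2, h1x]
  have hE : (99/100 : ℝ) ≤ 1 + x + x^2 := by nlinarith [hx.1, sq_nonneg x]
  have hR : ((99:ℝ)/100)^3 ≤ (1+x+x^2)^3 := pow_le_pow_left₀ (by norm_num) hE 3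
  nlinarith [hL, hR]

lemma qf_abs_lt {x : ℝ} (hx : |x| ≤ 1/100) : |qf x| < 1/8 := by
  rw [abs_le] at hx
  have h2x : (0:ℝ) < 1 + 2*x := by linarith
  rw [qf, abs_div, abs_of_pos h2x, div_lt_iff₀ h2x]
  have h1 : |x^3*(2+x)| ≤ 3/1000000 := by
    rw [abs_mul, abs_pow]
    have ha : |x| ≤ 1/100 := abs_le.mpr hx
    have hb : |x|^3 ≤ (1/100:ℝ)^3 := pow_le_pow_left₀ (abs_nonneg x) ha 3
    have hc : |2+x| ≤ 3 := by rw [abs_le]; constructor <;> linarith [hx.1, hx.2]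
    calc |x|^3 * |2+x| ≤ (1/100:ℝ)^3 * 3 :=
          mul_le_mul hb hc (abs_nonneg _) (by positivity)
      _ ≤ 3/1000000 := by norm_num
  calc |x^3*(2+x)| ≤ 3/1000000 := h1
    _ < 1/8 * (1+2*x) := by nlinarith [hx.1]


lemma ode_L (x S0 S1 S2 U0 U1 U2 : ℝ) (hE : (1+x+x^2 : ℝ) ≠ 0) (h2x : (1+2*x : ℝ) ≠ 0)
    (hNp : Np x ≠ 0) (hDmN : Dp x - Np x ≠ 0)
    (hS1' : S1 = -S0/(2*(1+2*x)))
    (hS2' : S2 = -S0/(4*(1+2*x)^2))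
    (hU2' : U2 = ((2/9)*(Dp x)^2*U0 - Dp x*(Dp x - 2*Np x)*U1) / (Np x * (Dp x - Np x))) :
    Ppoly x * (4*S2*U0 + (-2*S1)*(U1*pf1 x) + ((-2*S1)*(U1*pf1 x)
        + S0*(U2*pf1 x*pf1 x + U1*pf2 x)))
      + Qpoly x * ((-2*S1)*U0 + S0*(U1*pf1 x))
      + Rpoly x * (S0*U0) = 0 := by
  rw [hS1', hS2', hU2']
  rw [Ppoly, Qpoly, Rpoly, pf1, pf2, Np, Dp] at *
  have hx0 : x ≠ 0 := by rintro rfl; simp at hNp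
  have h1x : 1 + x ≠ 0 := by intro h; apply hNp; rw [h]; ring
  set D := 4 * (1 + x + x ^ 2) ^ 3 - 27 * x ^ 2 * (1 + x) ^ 2 with hDdef
  field_simp
  rw [hDdef]
  ring

lemma ode_R (x V0 V1 V2 : ℝ) (h2x : (1+2*x : ℝ) ≠ 0)
    (hq0 : (x^3*(2+x) : ℝ) ≠ 0) (hq1 : ((1+2*x) - x^3*(2+x) : ℝ) ≠ 0)
    (hV2' : V2 = ((1/4)*(1+2*x)^2*V0 - (1+2*x)*((1+2*x) - 2*(x^3*(2+x)))*V1)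
        / ((x^3*(2+x)) * ((1+2*x) - x^3*(2+x)))) :
    Ppoly x * (2*V0 + (1+2*x)*(V1*qf1 x) + ((1+2*x)*(V1*qf1 x)
        + (1+x+x^2)*(V2*qf1 x*qf1 x + V1*qf2 x)))
      + Qpoly x * ((1+2*x)*V0 + (1+x+x^2)*(V1*qf1 x))
      + Rpoly x * ((1+x+x^2)*V0) = 0 := by
  rw [hV2']
  rw [Ppoly, Qpoly, Rpoly, qf1, qf2] at *
  have hx0 : x ≠ 0 := by rintro rfl; simp at hq0
  have h2 : 2 + x ≠ 0 := right_ne_zero_of_mul hq0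
  field_simp
  ring

lemma cA_bound : ∀ n, |cA n| ≤ 1 * 1 ^ n := cH_bound (by norm_num) (by norm_num) (by norm_num) (by norm_num)
lemma cB_bound : ∀ n, |cB n| ≤ 1 * 1 ^ n := cH_bound (by norm_num) (by norm_num) (by norm_num) (by norm_num)

section derivs
variable {x : ℝ} (hx : |x| ≤ 1/100)

lemma abs2x (hx : |x| ≤ 1/100) : |(-2*x : ℝ)| ≤ 1/50 := by
  rw [abs_mul]
  norm_num
  linarith [hx]

lemma abspf (hx : |x| ≤ 1/100) : |pf x| < 1/8 := by
  rw [abs_of_nonneg (pf_nonneg x)]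
  exact pf_lt hx

include hx

lemma hS0d : HasDerivAt (fun y : ℝ => g cS (-2*y)) (g (sh cS) (-2*x) * -2) x := by
  have h := hasDerivAt_g (by norm_num) (le_refl 1) cS_bound
    (z := -2*x) (lt_of_le_of_lt (abs2x hx) (by norm_num))
  have hlin : HasDerivAt (fun y : ℝ => -2*y) (-2 : ℝ) x := by
    simpa using (hasDerivAt_id x).const_mul (-2 : ℝ)
  exact h.comp x hlin

lemma hS1d : HasDerivAt (fun y : ℝ => g (sh cS) (-2*y)) (g (sh (sh cS)) (-2*x) * -2) x := by
  have h := hasDerivAt_g (by norm_num) (by norm_num : (1:ℝ) ≤ 2) (bound_sh1 cS_bound)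
    (z := -2*x) (lt_of_le_of_lt (abs2x hx) (by norm_num))
  have hlin : HasDerivAt (fun y : ℝ => -2*y) (-2 : ℝ) x := by
    simpa using (hasDerivAt_id x).const_mul (-2 : ℝ)
  exact h.comp x hlin

lemma hU0d : HasDerivAt (fun y : ℝ => g cA (pf y)) (g (sh cA) (pf x) * pf1 x) x :=
  (hasDerivAt_g (by norm_num) (le_refl 1) cA_bound
    (lt_trans (abspf hx) (by norm_num))).comp x (hasDerivAt_pf x)

lemma hU1d : HasDerivAt (fun y : ℝ => g (sh cA) (pf y)) (g (sh (sh cA)) (pf x) * pf1 x) x :=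
  (hasDerivAt_g (by norm_num) (by norm_num : (1:ℝ) ≤ 2) (bound_sh1 cA_bound)
    (lt_of_lt_of_le (abspf hx) (by norm_num))).comp x (hasDerivAt_pf x)

lemma h2x_pos : (0:ℝ) < 1 + 2*x := by
  rw [abs_le] at hx; linarith [hx.1]

lemma hV0d : HasDerivAt (fun y : ℝ => g cB (qf y)) (g (sh cB) (qf x) * qf1 x) x :=
  (hasDerivAt_g (by norm_num) (le_refl 1) cB_bound
    (lt_trans (qf_abs_lt hx) (by norm_num))).comp x (hasDerivAt_qf (ne_of_gt (h2x_pos hx)))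

lemma hV1d : HasDerivAt (fun y : ℝ => g (sh cB) (qf y)) (g (sh (sh cB)) (qf x) * qf1 x) x :=
  (hasDerivAt_g (by norm_num) (by norm_num : (1:ℝ) ≤ 2) (bound_sh1 cB_bound)
    (lt_of_lt_of_le (qf_abs_lt hx) (by norm_num))).comp x (hasDerivAt_qf (ne_of_gt (h2x_pos hx)))

lemma hasDerivAt_Lf : HasDerivAt Lf (Lf1 x) x := (hS0d hx).mul (hU0d hx)

lemma hasDerivAt_Lf1 : HasDerivAt Lf1 (Lf2 x) x := by
  have hA := ((hS1d hx).mul_const (-2 : ℝ)).mul (hU0d hx)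
  have hB := (hS0d hx).mul ((hU1d hx).mul (hasDerivAt_pf1 x))
  have h := hA.add hB
  exact h

lemma hasDerivAt_Rf : HasDerivAt Rf (Rf1 x) x := by
  have hpoly : HasDerivAt (fun y : ℝ => 1 + y + y^2) (1 + 2*x) x := by
    have := ((hasDerivAt_id x).const_add 1).fun_add (hasDerivAt_pow 2 x)
    simpa using this
  exact hpoly.mul (hV0d hx)

lemma hasDerivAt_Rf1 : HasDerivAt Rf1 (Rf2 x) x := by
  have hpoly : HasDerivAt (fun y : ℝ => 1 + y + y^2) (1 + 2*x) x := by
    have := ((hasDerivAt_id x).const_add 1).fun_add (hasDerivAt_pow 2 x)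
    simpa using this
  have hlin : HasDerivAt (fun y : ℝ => 1 + 2*y) (2:ℝ) x := by
    simpa using ((hasDerivAt_id x).const_mul 2).const_add 1
  have hA := hlin.mul (hV0d hx)
  have hB := hpoly.mul ((hV1d hx).mul (hasDerivAt_qf1 (ne_of_gt (h2x_pos hx))))
  exact hA.add hB

lemma hasDerivAt_wf : HasDerivAt wf (wf1 x) x := (hasDerivAt_Lf hx).sub (hasDerivAt_Rf hx)
lemma hasDerivAt_wf1 : HasDerivAt wf1 (wf2 x) x := (hasDerivAt_Lf1 hx).sub (hasDerivAt_Rf1 hx)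

end derivs

lemma ode_wf {x : ℝ} (hx : |x| ≤ 1/100) (hx0 : x ≠ 0) :
    Ppoly x * wf2 x + Qpoly x * wf1 x + Rpoly x * wf x = 0 := by
  have h2x := h2x_pos hx
  have hE := den_pos x
  have hxx := abs_le.mp hx
  have h1x : (0:ℝ) < 1 + x := by linarith [hxx.1]
  -- L part
  have hNp : Np x ≠ 0 := by
    simp only [Np]
    positivity
  have hDppos : 0 < Dp x := by simp only [Dp]; positivity
  have hpfe : pf x = Np x / Dp x := rfl
  have hpDN : 0 < Dp x - Np x := by
    have hlt := pf_lt hx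
    rw [hpfe, div_lt_iff₀ hDppos] at hlt
    have hNp0 : 0 ≤ Np x := by simp only [Np]; positivity
    nlinarith [hlt, hDppos]
  have hS1 := g_sqrtA (z := -2*x) (lt_of_le_of_lt (abs2x hx) (by norm_num))
  have hS2 := g_sqrtB (z := -2*x) (lt_of_le_of_lt (abs2x hx) (by norm_num))
  have hU : pf x * (1 - pf x) * g (sh (sh cA)) (pf x)
      + (1 - 2*pf x) * g (sh cA) (pf x) - (1/3)*(2/3) * g cA (pf x) = 0 :=
    g_hyp_ode (a := 1/3) (b := 2/3) (by norm_num) (by norm_num) (by norm_num)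
      (by norm_num) (by norm_num) (abspf hx)
  have hS1' : g (sh cS) (-2*x) = -(g cS (-2*x))/(2*(1+2*x)) := by
    rw [eq_div_iff (by positivity)]
    linear_combination hS1
  have hS2' : g (sh (sh cS)) (-2*x) = -(g cS (-2*x))/(4*(1+2*x)^2) := by
    rw [eq_div_iff (by positivity)]
    linear_combination 2*(1+2*x)*hS2 + hS1
  have hNpD : pf x * Dp x = Np x := by
    rw [hpfe, div_mul_cancel₀ _ (ne_of_gt hDppos)]
  have hUc : Np x*(Dp x - Np x)* g (sh (sh cA)) (pf x)
      + Dp x*(Dp x - 2*Np x)* g (sh cA) (pf x) - (2/9)*(Dp x)^2* g cA (pf x) = 0 := by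
    linear_combination (Dp x)^2*hU
      + (g (sh (sh cA)) (pf x)*(pf x*Dp x + Np x - Dp x) + 2*Dp x* g (sh cA) (pf x)) * hNpD
  have hU2' : g (sh (sh cA)) (pf x) =
      ((2/9)*(Dp x)^2* g cA (pf x) - Dp x*(Dp x - 2*Np x)* g (sh cA) (pf x))
        / (Np x * (Dp x - Np x)) := by
    rw [eq_div_iff (mul_ne_zero hNp (ne_of_gt hpDN))]
    linear_combination hUc
  have hL := ode_L x (g cS (-2*x)) (g (sh cS) (-2*x)) (g (sh (sh cS)) (-2*x))
    (g cA (pf x)) (g (sh cA) (pf x)) (g (sh (sh cA)) (pf x))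
    (ne_of_gt hE) (ne_of_gt h2x) hNp (ne_of_gt hpDN) hS1' hS2' hU2'
  -- R part
  have hNq : (x^3*(2+x) : ℝ) ≠ 0 := by
    apply mul_ne_zero (pow_ne_zero 3 hx0)
    intro h; nlinarith [hxx.1]
  have hqDN : (0:ℝ) < (1+2*x) - x^3*(2+x) := by
    have hlt := (abs_lt.mp (qf_abs_lt hx)).2
    rw [qf, div_lt_iff₀ h2x] at hlt
    nlinarith [hlt, h2x]
  have hV : qf x * (1 - qf x) * g (sh (sh cB)) (qf x)
      + (1 - 2*qf x) * g (sh cB) (qf x) - (1/2)*(1/2) * g cB (qf x) = 0 :=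
    g_hyp_ode (a := 1/2) (b := 1/2) (by norm_num) (by norm_num) (by norm_num)
      (by norm_num) (by norm_num) (qf_abs_lt hx)
  have hqfe : qf x = (x^3*(2+x)) / (1+2*x) := rfl
  have hNqD : qf x * (1+2*x) = x^3*(2+x) := by
    rw [hqfe, div_mul_cancel₀ _ (ne_of_gt h2x)]
  have hVc : (x^3*(2+x))*((1+2*x) - x^3*(2+x))* g (sh (sh cB)) (qf x)
      + (1+2*x)*((1+2*x) - 2*(x^3*(2+x)))* g (sh cB) (qf x)
      - (1/4)*(1+2*x)^2* g cB (qf x) = 0 := by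
    linear_combination (1+2*x)^2*hV
      + (g (sh (sh cB)) (qf x)*(qf x*(1+2*x) + x^3*(2+x) - (1+2*x))
        + 2*(1+2*x)* g (sh cB) (qf x)) * hNqD
  have hV2' : g (sh (sh cB)) (qf x) =
      ((1/4)*(1+2*x)^2* g cB (qf x) - (1+2*x)*((1+2*x) - 2*(x^3*(2+x)))* g (sh cB) (qf x))
        / ((x^3*(2+x)) * ((1+2*x) - x^3*(2+x))) := by
    rw [eq_div_iff (mul_ne_zero hNq (ne_of_gt hqDN))]
    linear_combination hVc
  have hR := ode_R x (g cB (qf x)) (g (sh cB) (qf x)) (g (sh (sh cB)) (qf x))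
    (ne_of_gt h2x) hNq (ne_of_gt hqDN) hV2'
  rw [wf, wf1, wf2, Lf, Lf1, Lf2, Rf, Rf1, Rf2]
  linear_combination hL - hR

lemma wf_zero : wf 0 = 0 := by
  have hp0 : pf 0 = 0 := by rw [pf]; norm_num
  have hq0 : qf 0 = 0 := by rw [qf]; norm_num
  rw [wf, Lf, Rf, hp0, hq0]
  norm_num [g_zero, cS_zero, show cA 0 = 1 from cH_zero _ _, show cB 0 = 1 from cH_zero _ _]

lemma analyticAt_wf : AnalyticAt ℝ wf 0 := by
  have hgS : AnalyticAt ℝ (g cS) 0 := analyticAt_g (by norm_num) (le_refl 1) cS_bound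
  have hgA : AnalyticAt ℝ (g cA) 0 := analyticAt_g (by norm_num) (le_refl 1) cA_bound
  have hgB : AnalyticAt ℝ (g cB) 0 := analyticAt_g (by norm_num) (le_refl 1) cB_bound
  have hlin : AnalyticAt ℝ (fun y : ℝ => -2*y) 0 := (analyticAt_const).mul analyticAt_id
  have hpoly1 : AnalyticAt ℝ (fun y : ℝ => 27 * y ^ 2 * (1 + y) ^ 2) 0 := by
    apply AnalyticAt.mul
    · exact (analyticAt_const).mul (analyticAt_id.pow 2)
    · exact ((analyticAt_const).add analyticAt_id).pow 2
  have hpoly2 : AnalyticAt ℝ (fun y : ℝ => 4 * (1 + y + y ^ 2) ^ 3) 0 := by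
    apply AnalyticAt.mul analyticAt_const
    exact (((analyticAt_const).add analyticAt_id).add (analyticAt_id.pow 2)).pow 3
  have hpf : AnalyticAt ℝ pf 0 := by
    apply hpoly1.div hpoly2
    norm_num
  have hqf : AnalyticAt ℝ qf 0 := by
    apply AnalyticAt.div
    · exact (analyticAt_id.pow 3).mul ((analyticAt_const).add analyticAt_id)
    · exact (analyticAt_const).add ((analyticAt_const).mul analyticAt_id)
    · norm_num
  have hSc : AnalyticAt ℝ (fun y : ℝ => g cS (-2*y)) 0 := by
    have h1 : AnalyticAt ℝ (g cS) ((fun y : ℝ => -2*y) 0) := by simpa using hgS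
    exact h1.comp hlin
  have hAc : AnalyticAt ℝ (fun y : ℝ => g cA (pf y)) 0 := by
    have h1 : AnalyticAt ℝ (g cA) (pf 0) := by
      rw [show pf 0 = 0 by rw [pf]; norm_num]
      exact hgA
    exact h1.comp hpf
  have hBc : AnalyticAt ℝ (fun y : ℝ => g cB (qf y)) 0 := by
    have h1 : AnalyticAt ℝ (g cB) (qf 0) := by
      rw [show qf 0 = 0 by rw [qf]; norm_num]
      exact hgB
    exact h1.comp hqf
  have hLa : AnalyticAt ℝ Lf 0 := hSc.mul hAc
  have hRa : AnalyticAt ℝ Rf 0 := by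
    apply AnalyticAt.mul
    · exact ((analyticAt_const).add analyticAt_id).add (analyticAt_id.pow 2)
    · exact hBc
  exact hLa.sub hRa


lemma h100ev : ∀ᶠ x : ℝ in nhds 0, |x| ≤ 1/100 := by
  have h := Metric.ball_mem_nhds (0:ℝ) (by norm_num : (0:ℝ) < 1/100)
  filter_upwards [h] with x hx
  rw [Metric.mem_ball, Real.dist_eq, sub_zero] at hx
  exact hx.le

lemma contr_aux (H : ℝ → ℝ) (hc : ContinuousAt H 0)
    (h0 : ∀ᶠ x in nhdsWithin (0:ℝ) {(0:ℝ)}ᶜ, H x = 0) : H 0 = 0 := by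
  have h1 : Filter.Tendsto H (nhdsWithin (0:ℝ) {(0:ℝ)}ᶜ) (nhds (H 0)) :=
    hc.continuousWithinAt.tendsto
  have h2 : Filter.Tendsto H (nhdsWithin (0:ℝ) {(0:ℝ)}ᶜ) (nhds 0) := by
    rw [Filter.tendsto_congr' h0]
    exact tendsto_const_nhds
  exact tendsto_nhds_unique h1 h2

lemma wf_eventually_zero : ∀ᶠ x : ℝ in nhds 0, wf x = 0 := by
  rcases eq_or_ne (analyticOrderAt wf 0) ⊤ with htop | hne
  · exact analyticOrderAt_eq_top.mp htop
  exfalso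
  obtain ⟨n, hn⟩ := WithTop.ne_top_iff_exists.mp hne
  obtain ⟨gg, hgg_an, hgg0, hev⟩ := (analyticAt_wf.analyticOrderAt_eq_natCast).mp hn.symm
  have hev' : ∀ᶠ z : ℝ in nhds 0, wf z = z ^ n * gg z := by
    filter_upwards [hev] with z hz
    simpa using hz
  obtain ⟨m, rfl⟩ : ∃ m, n = m + 1 := by
    cases n with
    | zero =>
      exfalso
      have h00 := hev'.self_of_nhds
      rw [wf_zero] at h00
      simp at h00
      exact hgg0 h00.symm
    | succ m => exact ⟨m, rfl⟩
  obtain ⟨ε, hε, hball⟩ := Metric.eventually_nhds_iff_ball.mp hgg_an.eventually_analyticAt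
  have hOn : AnalyticOnNhd ℝ gg (Metric.ball (0:ℝ) ε) := fun y hy => hball y hy
  have hOn1 : AnalyticOnNhd ℝ (deriv gg) (Metric.ball (0:ℝ) ε) := hOn.deriv
  have hOn2 : AnalyticOnNhd ℝ (deriv (deriv gg)) (Metric.ball (0:ℝ) ε) := hOn1.deriv
  set g1 : ℝ → ℝ := fun z => ((m:ℝ)+1) * gg z + z * deriv gg z with hg1
  set g1d : ℝ → ℝ := fun z => ((m:ℝ)+1) * deriv gg z + (1 * deriv gg z + z * deriv (deriv gg) z)
    with hg1d
  have hd_gg : ∀ y ∈ Metric.ball (0:ℝ) ε, HasDerivAt gg (deriv gg y) y :=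
    fun y hy => (hOn y hy).differentiableAt.hasDerivAt
  have hd_g1 : ∀ y ∈ Metric.ball (0:ℝ) ε, HasDerivAt g1 (g1d y) y := by
    intro y hy
    exact ((hd_gg y hy).const_mul (((m:ℝ)+1))).add
      ((hasDerivAt_id y).mul ((hOn1 y hy).differentiableAt.hasDerivAt))
  have hmem : ∀ᶠ x : ℝ in nhds 0, x ∈ Metric.ball (0:ℝ) ε := Metric.ball_mem_nhds 0 hε
  have h0mem : (0:ℝ) ∈ Metric.ball (0:ℝ) ε := Metric.mem_ball_self hε
  have hcg : ContinuousAt gg 0 := (hOn 0 h0mem).continuousAt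
  have hcg1 : ContinuousAt (deriv gg) 0 := (hOn1 0 h0mem).continuousAt
  have hcg2 : ContinuousAt (deriv (deriv gg)) 0 := (hOn2 0 h0mem).continuousAt
  have hcG1 : ContinuousAt g1 0 := by
    rw [hg1]
    exact (continuousAt_const.mul hcg).add (continuousAt_id.mul hcg1)
  have hcG1d : ContinuousAt g1d 0 := by
    rw [hg1d]
    exact (continuousAt_const.mul hcg1).add
      ((continuousAt_const.mul hcg1).add (continuousAt_id.mul hcg2))
  have hg1_zero : g1 0 = ((m:ℝ)+1) * gg 0 := by rw [hg1]; simp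
  have hevx : ∀ᶠ x : ℝ in nhds 0, wf1 x = x ^ m * g1 x := by
    filter_upwards [hev'.eventually_nhds, hmem, h100ev] with x hx1 hx2 hx3
    have hwd : HasDerivAt wf (wf1 x) x := hasDerivAt_wf hx3
    have hpow : HasDerivAt (fun z : ℝ => z ^ (m+1) * gg z)
        (((m:ℝ)+1) * x ^ m * gg x + x ^ (m+1) * deriv gg x) x := by
      have := (hasDerivAt_pow (m+1) x).fun_mul (hd_gg x hx2)
      exact this.congr_deriv (by simp)
    have hwd2 : HasDerivAt wf (((m:ℝ)+1) * x ^ m * gg x + x ^ (m+1) * deriv gg x) x :=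
      hpow.congr_of_eventuallyEq hx1
    rw [hwd.unique hwd2, hg1, pow_succ]
    ring
  rcases Nat.eq_zero_or_pos m with hm0 | hmpos
  · -- case n = 1
    subst hm0
    have hevx' : ∀ᶠ x : ℝ in nhds 0, wf1 x = g1 x := by
      filter_upwards [hevx] with x hx
      simpa using hx
    have hevx2 : ∀ᶠ x : ℝ in nhds 0, wf2 x = g1d x := by
      filter_upwards [hevx'.eventually_nhds, hmem, h100ev] with x hx1 hx2 hx3
      have hwd : HasDerivAt wf1 (wf2 x) x := hasDerivAt_wf1 hx3
      have hwd2 : HasDerivAt wf1 (g1d x) x :=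
        (hd_g1 x hx2).congr_of_eventuallyEq hx1
      exact hwd.unique hwd2
    set H : ℝ → ℝ := fun x => Ppoly x * g1d x + Qpoly x * g1 x + Rpoly x * (x * gg x) with hH
    have hHc : ContinuousAt H 0 := by
      rw [hH]
      have hPc : Continuous Ppoly := by unfold Ppoly; fun_prop
      have hQc : Continuous Qpoly := by unfold Qpoly; fun_prop
      have hRc : Continuous Rpoly := by unfold Rpoly; fun_prop
      exact ((hPc.continuousAt.mul hcG1d).add (hQc.continuousAt.mul hcG1)).add
        (hRc.continuousAt.mul (continuousAt_id.mul hcg))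
    have hH0 : ∀ᶠ x in nhdsWithin (0:ℝ) {(0:ℝ)}ᶜ, H x = 0 := by
      have hbig : ∀ᶠ x : ℝ in nhds 0, x ≠ 0 → H x = 0 := by
        filter_upwards [hevx', hevx2, hev', h100ev] with x h1 h2 h3 h4
        intro hx0
        have hode := ode_wf h4 hx0
        rw [h1, h2, h3] at hode
        rw [hH]
        linear_combination hode
      filter_upwards [eventually_nhdsWithin_of_eventually_nhds hbig,
        self_mem_nhdsWithin] with x h1 h2
      exact h1 h2
    have hzero := contr_aux H hHc hH0
    have hH0val : H 0 = 2 * g1 0 := by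
      rw [hH]
      simp only
      rw [show Ppoly 0 = 0 from by rw [Ppoly]; norm_num,
          show Qpoly 0 = 2 from by rw [Qpoly]; norm_num]
      ring
    rw [hH0val] at hzero
    apply hgg0
    have hgv := hg1_zero
    push_cast at hgv
    linarith [hzero, hgv]
  · -- case n = m + 1, m ≥ 1
    obtain ⟨k, rfl⟩ := Nat.exists_eq_add_of_lt hmpos
    rw [zero_add] at *
    set g2 : ℝ → ℝ := fun z => ((k:ℝ)+1) * g1 z + z * g1d z with hg2
    have hg2_zero : g2 0 = ((k:ℝ)+1) * g1 0 := by rw [hg2]; simp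
    have hcG2 : ContinuousAt g2 0 := by
      rw [hg2]
      exact (continuousAt_const.mul hcG1).add (continuousAt_id.mul hcG1d)
    have hevx2 : ∀ᶠ x : ℝ in nhds 0, wf2 x = x ^ k * g2 x := by
      filter_upwards [hevx.eventually_nhds, hmem, h100ev] with x hx1 hx2 hx3
      have hwd : HasDerivAt wf1 (wf2 x) x := hasDerivAt_wf1 hx3
      have hpow : HasDerivAt (fun z : ℝ => z ^ (k+1) * g1 z)
          (((k:ℝ)+1) * x ^ k * g1 x + x ^ (k+1) * g1d x) x := by
        have := (hasDerivAt_pow (k+1) x).fun_mul (hd_g1 x hx2)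
        exact this.congr_deriv (by simp)
      have hwd2 : HasDerivAt wf1 (((k:ℝ)+1) * x ^ k * g1 x + x ^ (k+1) * g1d x) x :=
        hpow.congr_of_eventuallyEq hx1
      rw [hwd.unique hwd2, hg2, pow_succ]
      ring
    set H : ℝ → ℝ := fun x => Phat x * g2 x + Qpoly x * g1 x + Rpoly x * (x * gg x) with hH
    have hHc : ContinuousAt H 0 := by
      rw [hH]
      have hPc : Continuous Phat := by unfold Phat; fun_prop
      have hQc : Continuous Qpoly := by unfold Qpoly; fun_prop
      have hRc : Continuous Rpoly := by unfold Rpoly; fun_prop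
      exact ((hPc.continuousAt.mul hcG2).add (hQc.continuousAt.mul hcG1)).add
        (hRc.continuousAt.mul (continuousAt_id.mul hcg))
    have hH0 : ∀ᶠ x in nhdsWithin (0:ℝ) {(0:ℝ)}ᶜ, H x = 0 := by
      have hbig : ∀ᶠ x : ℝ in nhds 0, x ≠ 0 → H x = 0 := by
        filter_upwards [hevx, hevx2, hev', h100ev] with x h1 h2 h3 h4
        intro hx0
        have hode := ode_wf h4 hx0
        rw [h1, h2, h3] at hode
        have hfac : Ppoly x * (x ^ k * g2 x) + Qpoly x * (x ^ (k + 1) * g1 x)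
            + Rpoly x * (x ^ (k + 1 + 1) * gg x) = x ^ (k+1) * H x := by
          rw [hH, show Ppoly x = x * Phat x from by rw [Ppoly, Phat]; ring]
          rw [pow_succ, pow_succ]
          ring
        rw [hfac] at hode
        rcases mul_eq_zero.mp hode with h | h
        · exact absurd h (pow_ne_zero _ hx0)
        · exact h
      filter_upwards [eventually_nhdsWithin_of_eventually_nhds hbig,
        self_mem_nhdsWithin] with x h1 h2
      exact h1 h2
    have hzero := contr_aux H hHc hH0
    have hH0val : H 0 = 2 * g2 0 + 2 * g1 0 := by
      rw [hH]
      simp only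
      rw [show Phat 0 = 2 from by rw [Phat]; norm_num,
          show Qpoly 0 = 2 from by rw [Qpoly]; norm_num,
          show Rpoly 0 = -2 from by rw [Rpoly]; norm_num]
      ring
    rw [hH0val, hg2_zero, hg1_zero] at hzero
    push_cast at hzero
    have hkey : (2*((k:ℝ)+1)*(((k:ℝ)+1)+1) + 2*(((k:ℝ)+1)+1)) * gg 0 = 0 := by
      linear_combination hzero
    have hc : (0:ℝ) < 2*((k:ℝ)+1)*(((k:ℝ)+1)+1) + 2*(((k:ℝ)+1)+1) := by positivity
    exact hgg0 ((mul_eq_zero.mp hkey).resolve_left (ne_of_gt hc))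



end Stmt15


open Stmt15 in
theorem stmt15 :
    ∀ᶠ x : ℝ in nhds 0,
      Real.sqrt (1 + 2 * x)
          * F21 (1 / 3) (2 / 3) (27 * x ^ 2 * (1 + x) ^ 2 / (4 * (1 + x + x ^ 2) ^ 3))
        = (1 + x + x ^ 2)
            * F21 (1 / 2) (1 / 2) (x ^ 3 * (2 + x) / (1 + 2 * x)) := by
  filter_upwards [wf_eventually_zero, h100ev] with x hw hx
  have hsq : Real.sqrt (1 + 2 * x) = g cS (-2*x) := by
    have h := g_cS_eq_sqrt (z := -2*x) (lt_of_le_of_lt (abs2x hx) (by norm_num))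
    rw [show (1:ℝ) - -2*x = 1 + 2 * x by ring] at h
    exact h.symm
  have hF1 : F21 (1 / 3) (2 / 3) (27 * x ^ 2 * (1 + x) ^ 2 / (4 * (1 + x + x ^ 2) ^ 3))
      = g cA (pf x) := rfl
  have hF2 : F21 (1 / 2) (1 / 2) (x ^ 3 * (2 + x) / (1 + 2 * x)) = g cB (qf x) := rfl
  rw [hsq, hF1, hF2]
  have h0 : Lf x - Rf x = 0 := hw
  rw [Lf, Rf] at h0
  linarith [h0]
end
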